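/- arXiv:1703.00482 — 8 statements merged into one kernel-verified Lean document; each statement's English description precedes it below -/
import Mathlib

section
/- Let y₁ ≥ y₂ ≥ … ≥ y_m be reals and let σ₁,…,σ_{2^k} be permutations of [m] constructed greedily: σ₁ is the identity, and for each ℓ ≥ 2, σ_ℓ assigns the values y₁ ≥ … ≥ y_m to positions in increasing order of the partial sums Ŝ_j = Σ_{i<ℓ} y_{σ_i(j)} (largest value to smallest partial sum). Then (1/(2^{2k} m)) Σ_{j=1}^m (Σ_{i=1}^{2^k} y_{σ_i(j)})² − μ² ≤ (1/2^k)(E[Y²] − μ²), where μ = (1/m) Σ_j y_j and E[Y²] = (1/m) Σ_j y_j². -/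
/-- Expectation of `f` under mass function `p` on a finite sample space. -/
noncomputable def pexp {Ω : Type*} [Fintype Ω] (p : Ω → ℝ) (f : Ω → ℝ) : ℝ :=
  ∑ ω, p ω * f ω

/-- Variance of `f` under mass function `p`. -/
noncomputable def pvar {Ω : Type*} [Fintype Ω] (p : Ω → ℝ) (f : Ω → ℝ) : ℝ :=
  pexp p (fun ω => (f ω - pexp p f) ^ 2)

/-- Minimum mean-squared error of estimating `Y` from the observation `τ`:
the infimum over all estimators `h` of `E[(Y - h(τ))²]`. -/
noncomputable def pmmse {Ω T : Type*} [Fintype Ω] (p : Ω → ℝ) (Y : Ω → ℝ) (τ : Ω → T) : ℝ :=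
  sInf {e : ℝ | ∃ h : T → ℝ, e = pexp p (fun ω => (Y ω - h (τ ω)) ^ 2)}

/-- Conditional expectation `E[Y | τ = t]` (with the junk value `0` on null events). -/
noncomputable def pcond {Ω T : Type*} [Fintype Ω] [DecidableEq T]
    (p : Ω → ℝ) (Y : Ω → ℝ) (τ : Ω → T) (t : T) : ℝ :=
  (∑ ω ∈ Finset.univ.filter (fun ω => τ ω = t), p ω * Y ω) /
    (∑ ω ∈ Finset.univ.filter (fun ω => τ ω = t), p ω)

/-!
Expanding the square, `∑ⱼ (∑ᵢ y_{σᵢ(j)})²` is `2^k ∑ y²` plus twice the cross terms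
`∑ⱼ y_{σ_ℓ(j)} Ŝ_ℓ(j)`. Each `σ_ℓ` permutes the values, so both factors of a cross term have a
known total (`∑ y` and `ℓ ∑ y`), and since they are oppositely ordered Chebyshev's sum
inequality bounds the cross term by `ℓ (∑ y)² / m`, its value for uncorrelated factors.
Summing over `ℓ < 2^k` gives exactly the claimed variance reduction by `2^k`.
-/

open Finset

theorem sq_sum_eq_sum_sq_add_two_mul_sum_mul_sum_lt {ι R : Type*} [LinearOrder ι] [CommSemiring R]
    (s : Finset ι) (a : ι → R) :
    (∑ i ∈ s, a i) ^ 2 = ∑ i ∈ s, a i ^ 2 + 2 * ∑ i ∈ s, a i * ∑ j ∈ s with j < i, a j := by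
  induction s using Finset.induction_on_max with
  | empty => simp
  | insert b s hb ih =>
    have hbs : b ∉ s := fun h => lt_irrefl b (hb b h)
    have hlt_b : {j ∈ insert b s | j < b} = s := by
      rw [filter_insert, if_neg (lt_irrefl b), filter_true_of_mem hb]
    have hlt_i : ∑ i ∈ s, a i * ∑ j ∈ insert b s with j < i, a j =
        ∑ i ∈ s, a i * ∑ j ∈ s with j < i, a j :=
      sum_congr rfl fun i hi => by rw [filter_insert, if_neg (hb i hi).not_gt]
    rw [sum_insert hbs, sum_insert hbs, sum_insert hbs, hlt_b, hlt_i, add_sq, ih]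
    ring

theorem Fin.two_mul_sum_val (n : ℕ) : 2 * ∑ i : Fin n, (i : ℝ) = n * (n - 1) := by
  rw [Fin.sum_univ_eq_sum_range (fun i => (i : ℝ)), ← Nat.cast_sum]
  rcases n with _ | n
  · simp
  · rw [mul_comm, ← Nat.cast_two, ← Nat.cast_mul, sum_range_id_mul_two]; push_cast; ring

namespace Equiv.Perm

variable {α : Type*} [Fintype α] {n : ℕ} (y : α → ℝ) (σ : Fin n → Perm α)

theorem sum_sum_filter_lt_apply (ℓ : Fin n) :
    ∑ j, ∑ i with i < ℓ, y (σ i j) = ℓ * ∑ j, y j := by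
  rw [sum_comm, sum_congr rfl fun i _ => Equiv.sum_comp (σ i) y, sum_const, nsmul_eq_mul,
    filter_gt_eq_Iio, Fin.card_Iio]

variable {y σ}

theorem card_mul_sum_mul_sum_filter_lt_le {ℓ : Fin n}
    (hℓ : Antivary (fun j => y (σ ℓ j)) (fun j => ∑ i with i < ℓ, y (σ i j))) :
    Fintype.card α * ∑ j, y (σ ℓ j) * ∑ i with i < ℓ, y (σ i j) ≤ ℓ * (∑ j, y j) ^ 2 := by
  calc _ ≤ (∑ j, y (σ ℓ j)) * ∑ j, ∑ i with i < ℓ, y (σ i j) := hℓ.card_mul_sum_le_sum_mul_sum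
    _ = ℓ * (∑ j, y j) ^ 2 := by
      rw [Equiv.sum_comp, sum_sum_filter_lt_apply]; ring

theorem card_mul_sum_sq_sum_le
    (hgreedy : ∀ ℓ, Antivary (fun j => y (σ ℓ j)) (fun j => ∑ i with i < ℓ, y (σ i j))) :
    Fintype.card α * ∑ j, (∑ i, y (σ i j)) ^ 2 ≤
      Fintype.card α * n * ∑ j, y j ^ 2 + n * (n - 1) * (∑ j, y j) ^ 2 := by
  have hdiag : ∑ j, ∑ i, y (σ i j) ^ 2 = n * ∑ j, y j ^ 2 := by
    rw [sum_comm, sum_congr rfl fun i _ => Equiv.sum_comp (σ i) (y · ^ 2), sum_const,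
      card_univ, Fintype.card_fin, nsmul_eq_mul]
  have hexpand : ∑ j, (∑ i, y (σ i j)) ^ 2 =
      n * ∑ j, y j ^ 2 + 2 * ∑ ℓ, ∑ j, y (σ ℓ j) * ∑ i with i < ℓ, y (σ i j) := by
    simp only [sq_sum_eq_sum_sq_add_two_mul_sum_mul_sum_lt, sum_add_distrib, ← mul_sum, hdiag]
    rw [sum_comm]
  calc Fintype.card α * ∑ j, (∑ i, y (σ i j)) ^ 2
      = Fintype.card α * n * ∑ j, y j ^ 2 +
          2 * ∑ ℓ, Fintype.card α * ∑ j, y (σ ℓ j) * ∑ i with i < ℓ, y (σ i j) := by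
        rw [hexpand, ← mul_sum]; ring
    _ ≤ Fintype.card α * n * ∑ j, y j ^ 2 + 2 * ∑ ℓ : Fin n, ℓ * (∑ j, y j) ^ 2 := by
        gcongr _ + 2 * ∑ ℓ, ?_ with ℓ
        exact card_mul_sum_mul_sum_filter_lt_le (hgreedy ℓ)
    _ = _ := by rw [← sum_mul, ← mul_assoc, Fin.two_mul_sum_val]

end Equiv.Perm

theorem stmt4_general (m k : ℕ) (y : Fin m → ℝ)
    (σ : Fin (2 ^ k) → Equiv.Perm (Fin m))
    (hgreedy : ∀ ℓ : Fin (2 ^ k),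
      Antivary (fun j => y (σ ℓ j))
        (fun j => ∑ i ∈ Finset.univ.filter (fun i : Fin (2 ^ k) => i < ℓ), y (σ i j))) :
    (1 / ((2 : ℝ) ^ (2 * k) * m)) * ∑ j, (∑ i, y (σ i j)) ^ 2 - ((∑ j, y j) / m) ^ 2 ≤
      (1 / (2 : ℝ) ^ k) * ((∑ j, y j ^ 2) / m - ((∑ j, y j) / m) ^ 2) := by
  have hbound := Equiv.Perm.card_mul_sum_sq_sum_le hgreedy
  rw [Fintype.card_fin, Nat.cast_pow, Nat.cast_two] at hbound
  rw [pow_mul', ← sub_nonneg]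
  have hgap : 1 / (2 : ℝ) ^ k * ((∑ j, y j ^ 2) / m - ((∑ j, y j) / m) ^ 2) -
      (1 / ((2 ^ k) ^ 2 * m) * ∑ j, (∑ i, y (σ i j)) ^ 2 - ((∑ j, y j) / m) ^ 2) =
      (m * 2 ^ k * ∑ j, y j ^ 2 + 2 ^ k * (2 ^ k - 1) * (∑ j, y j) ^ 2 -
        m * ∑ j, (∑ i, y (σ i j)) ^ 2) / ((2 ^ k) ^ 2 * m ^ 2) := by
    field_simp
    ring
  rw [hgap]
  exact div_nonneg (sub_nonneg.mpr hbound) (by positivity)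

/-- The greedy permutation construction (Algorithm 1): at each step `ℓ` the new values are
assigned oppositely ordered to the accumulated partial sums; then the distortion gap is at
most `var(Y)/2^k`. -/
theorem stmt4 (m k : ℕ) (hm : 0 < m) (y : Fin m → ℝ)
    (hy : ∀ i j : Fin m, i ≤ j → y j ≤ y i)
    (σ : Fin (2 ^ k) → Equiv.Perm (Fin m))
    (hσ1 : σ ⟨0, Nat.two_pow_pos k⟩ = 1)
    (hgreedy : ∀ ℓ : Fin (2 ^ k),
      Antivary (fun j => y (σ ℓ j))
        (fun j => ∑ i ∈ Finset.univ.filter (fun i : Fin (2 ^ k) => i < ℓ), y (σ i j))) :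
    (1 / ((2 : ℝ) ^ (2 * k) * m)) * ∑ j, (∑ i, y (σ i j)) ^ 2 - ((∑ j, y j) / m) ^ 2 ≤
      (1 / (2 : ℝ) ^ k) * ((∑ j, y j ^ 2) / m - ((∑ j, y j) / m) ^ 2) :=
  stmt4_general m k y σ hgreedy
end

section
/- Balanced binning bound: place 2^k copies of each element of {y₁,…,y_m} ⊆ ℝ into m bins of 2^k elements each so that every bin sum S_j lies in [2^k μ − d, 2^k μ + d], where μ = (1/m)Σ y_j and d = max y_i − min y_j. Then the distortion gap satisfies (1/(2^{2k} m)) Σ_{j=1}^m S_j² − μ² ≤ d²/2^{2k}. -/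
/-!
Under each of the `2^k` bijections every value lands in exactly one bin, so the bin sums
`S_j` total `2^k m μ`. Hence `Σ S_j² = Σ (S_j - 2^k μ)² + m (2^k μ)²`, and the gap equals
`Σ (S_j - 2^k μ)² / (2^{2k} m)`, a mean of squared deviations each at most `d²`.
-/

open Finset

theorem Equiv.Perm.sum_sum_symm_apply {ι α M : Type*} [Fintype ι] [Fintype α] [AddCommMonoid M]
    (a : ι → Equiv.Perm α) (y : α → M) :
    ∑ j, ∑ i, y ((a i).symm j) = Fintype.card ι • ∑ j, y j := by
  rw [sum_comm]
  simp only [fun i => Equiv.sum_comp (a i).symm y, sum_const, card_univ]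

theorem Finset.sum_sq_eq_sum_sq_sub_add {α R : Type*} [CommRing R] (s : Finset α) (S : α → R)
    (c : R) (hS : ∑ j ∈ s, S j = #s * c) :
    ∑ j ∈ s, S j ^ 2 = ∑ j ∈ s, (S j - c) ^ 2 + #s * c ^ 2 := by
  have expand : ∀ j, (S j - c) ^ 2 = S j ^ 2 - 2 * c * S j + c ^ 2 := fun j => by ring
  simp only [expand, sum_add_distrib, sum_sub_distrib, ← mul_sum, hS, sum_const, nsmul_eq_mul]
  ring

theorem Finset.sum_sq_sub_le {α : Type*} (s : Finset α) (S : α → ℝ) (c d : ℝ)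
    (h : ∀ j ∈ s, |S j - c| ≤ d) :
    ∑ j ∈ s, (S j - c) ^ 2 ≤ #s * d ^ 2 := by
  rw [← nsmul_eq_mul]
  refine sum_le_card_nsmul s _ _ fun j hj => ?_
  exact sq_le_sq' (abs_le.1 (h j hj)).1 (abs_le.1 (h j hj)).2

/-- Balanced binning bound: with `2^k` bijections from values to `m` bins, if each bin sum
lies within `d` of `2^k μ` (where `d` is the diameter of the alphabet), the distortion gap
`(1/(2^{2k} m)) Σ S_j² − μ²` is at most `d²/2^{2k}`. -/
theorem stmt7 (m k : ℕ) (hm : 0 < m) (y : Fin m → ℝ)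
    (a : Fin (2 ^ k) → Equiv.Perm (Fin m)) :
    let μ : ℝ := (∑ j, y j) / m
    let d : ℝ := (Finset.univ.sup' ⟨⟨0, hm⟩, Finset.mem_univ _⟩ y) -
      (Finset.univ.inf' ⟨⟨0, hm⟩, Finset.mem_univ _⟩ y)
    let S : Fin m → ℝ := fun j => ∑ i, y ((a i).symm j)
    (∀ j, 2 ^ k * μ - d ≤ S j ∧ S j ≤ 2 ^ k * μ + d) →
      (1 / ((2 : ℝ) ^ (2 * k) * m)) * ∑ j, S j ^ 2 - μ ^ 2 ≤ d ^ 2 / 2 ^ (2 * k) := by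
  intro μ d S hS
  have sum_S : ∑ j, S j = #(univ : Finset (Fin m)) * (2 ^ k * μ) := by
    simp only [S, μ, Equiv.Perm.sum_sum_symm_apply, card_univ, Fintype.card_fin, nsmul_eq_mul]
    push_cast
    field_simp
  have spread : ∑ j, (S j - 2 ^ k * μ) ^ 2 ≤ m * d ^ 2 := by
    simpa using sum_sq_sub_le univ S _ d fun j _ =>
      abs_sub_le_iff.2 ⟨by linarith [hS j], by linarith [hS j]⟩
  rw [sum_sq_eq_sum_sq_sub_add univ S _ sum_S, card_univ, Fintype.card_fin]
  calc 1 / (2 ^ (2 * k) * m) * (∑ j, (S j - 2 ^ k * μ) ^ 2 + m * (2 ^ k * μ) ^ 2) - μ ^ 2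
      = (∑ j, (S j - 2 ^ k * μ) ^ 2) / (2 ^ (2 * k) * m) := by field_simp; ring
    _ ≤ m * d ^ 2 / (2 ^ (2 * k) * m) := by gcongr
    _ = d ^ 2 / 2 ^ (2 * k) := by field_simp
end

section
/- For a single source with k shared key bits and Y uniform on an m-element real alphabet, there exists a block-length-one encoding such that var(Y) − MMSE_Eve ≤ var(Y)/2^k, i.e., the eavesdropper's achievable distortion is at least (1 − 2^{−k})·var(Y), while the legitimate receiver (knowing the key) decodes Y exactly. -/
/-
Encrypt with a one-time pad over `ℤ/m`: key `i` sends the symbol `a` to `a + s i` for a fixed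
list of shifts `s : Fin 2ᵏ → ℤ/m`. Given the ciphertext `t`, the eavesdropper sees `Y` uniform on
the multiset `{t - s i}`, so her error is at least the within-group variance; with
`x = Y - E[Y]` and `Q = ∑ x²` this is `(2ᵏ Q - ∑ₜ (∑ᵢ x (t - s i))² / 2ᵏ) / (m 2ᵏ)`. For shifts
drawn independently and uniformly, `∑ᵢ x (t - s i)` is a sum of `2ᵏ` independent centred terms,
so its second moment averages to `2ᵏ Q / m`; some choice of shifts does at least as well, which
gives `MMSE ≥ (1 - 2⁻ᵏ) var(Y)`.
-/

section SumOverTuples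

variable {α : Type*} [Fintype α]

lemma Fintype.sum_fin_succ_pi {M : Type*} [AddCommMonoid M] (n : ℕ) (F : (Fin (n + 1) → α) → M) :
    ∑ s, F s = ∑ a, ∑ t : Fin n → α, F (Fin.cons a t) := by
  rw [← (Fin.consEquiv fun _ : Fin (n + 1) => α).sum_comp]
  simp [Fintype.sum_prod_type, Fin.consEquiv]

lemma sum_pi_sum_eq_zero {x : α → ℝ} (hx : ∑ a, x a = 0) (n : ℕ) :
    ∑ s : Fin n → α, ∑ i, x (s i) = 0 := by
  induction n with
  | zero => simp
  | succ n ih =>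
    simp only [Fintype.sum_fin_succ_pi, Fin.sum_univ_succ, Fin.cons_zero, Fin.cons_succ,
      Finset.sum_add_distrib, ih, Finset.sum_const, Finset.card_univ, nsmul_eq_mul,
      ← Finset.mul_sum, hx, mul_zero, add_zero]

lemma card_mul_sum_pi_sum_sq {x : α → ℝ} (hx : ∑ a, x a = 0) (n : ℕ) :
    Fintype.card α * ∑ s : Fin n → α, (∑ i, x (s i)) ^ 2 =
      n * Fintype.card α ^ n * ∑ a, x a ^ 2 := by
  induction n with
  | zero => simp
  | succ n ih =>
    have expand : ∀ a (t : Fin n → α), (∑ i, x ((Fin.cons a t : Fin (n + 1) → α) i)) ^ 2 =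
        x a ^ 2 + 2 * x a * ∑ i, x (t i) + (∑ i, x (t i)) ^ 2 := by
      intro a t
      rw [Fin.sum_univ_succ]
      simp only [Fin.cons_zero, Fin.cons_succ]
      ring
    simp only [Fintype.sum_fin_succ_pi, expand, Finset.sum_add_distrib, ← Finset.mul_sum,
      sum_pi_sum_eq_zero hx, mul_zero, add_zero, Finset.sum_const, Finset.card_univ,
      nsmul_eq_mul, Fintype.card_pi, Finset.prod_const, Fintype.card_fin]
    rw [mul_add, ih]
    push_cast
    ring

end SumOverTuples

section Shifts

variable {G : Type*} [AddCommGroup G] [Fintype G]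

lemma exists_shifts_sum_sq_le {x : G → ℝ} (hx : ∑ a, x a = 0) (n : ℕ) :
    ∃ s : Fin n → G, ∑ t, (∑ i, x (t - s i)) ^ 2 ≤ n * ∑ a, x a ^ 2 := by
  have hcard : (Fintype.card G : ℝ) ≠ 0 := by positivity
  have hshift : ∀ t, ∑ c, x (t - c) = 0 := fun t =>
    ((Equiv.subLeft t).sum_comp x).trans hx
  have hshift_sq : ∀ t, ∑ c, x (t - c) ^ 2 = ∑ a, x a ^ 2 := fun t =>
    (Equiv.subLeft t).sum_comp (x · ^ 2)
  have average : ∑ s : Fin n → G, ∑ t, (∑ i, x (t - s i)) ^ 2 =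
      ∑ _s : Fin n → G, n * ∑ a, x a ^ 2 := by
    apply mul_left_cancel₀ hcard
    rw [Finset.sum_comm, Finset.mul_sum]
    simp only [card_mul_sum_pi_sum_sq (hshift _), hshift_sq, Finset.sum_const,
      Finset.card_univ, nsmul_eq_mul, Fintype.card_pi, Finset.prod_const, Fintype.card_fin]
    push_cast
    ring
  obtain ⟨s, -, hs⟩ := Finset.exists_le_of_sum_le Finset.univ_nonempty average.le
  exact ⟨s, hs⟩

lemma card_mul_sum_sq_sub_sq_sum_le {ι : Type*} [Fintype ι] (u : ι → ℝ) (b : ℝ) :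
    Fintype.card ι * ∑ i, u i ^ 2 - (∑ i, u i) ^ 2 ≤ Fintype.card ι * ∑ i, (u i - b) ^ 2 := by
  have expand : ∑ i, (u i - b) ^ 2 = ∑ i, u i ^ 2 - 2 * b * ∑ i, u i + Fintype.card ι * b ^ 2 := by
    simp only [sub_sq, Finset.sum_add_distrib, Finset.sum_sub_distrib, Finset.sum_const,
      Finset.card_univ, nsmul_eq_mul, ← Finset.mul_sum, ← Finset.sum_mul]
    ring
  nlinarith [sq_nonneg (Fintype.card ι * b - ∑ i, u i)]

lemma sum_sq_sub_shift_ge {n : ℕ} (hn : 0 < n) (x : G → ℝ) {s : Fin n → G}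
    (hs : ∑ t, (∑ i, x (t - s i)) ^ 2 ≤ n * ∑ a, x a ^ 2) (g : G → ℝ) :
    (n - 1) * ∑ a, x a ^ 2 ≤ ∑ a, ∑ i, (x a - g (a + s i)) ^ 2 := by
  have regroup : ∑ a, ∑ i, (x a - g (a + s i)) ^ 2 = ∑ t, ∑ i, (x (t - s i) - g t) ^ 2 := by
    rw [Finset.sum_comm, Finset.sum_comm (γ := G)]
    refine Finset.sum_congr rfl fun i _ => ?_
    exact ((Equiv.subRight (s i)).sum_comp _).symm.trans (by simp)
  have within : ∑ t, (n * ∑ i, x (t - s i) ^ 2 - (∑ i, x (t - s i)) ^ 2) ≤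
      n * ∑ t, ∑ i, (x (t - s i) - g t) ^ 2 := by
    rw [Finset.mul_sum]
    refine Finset.sum_le_sum fun t _ => ?_
    simpa using card_mul_sum_sq_sub_sq_sum_le (fun i => x (t - s i)) (g t)
  have total : ∑ t, ∑ i, x (t - s i) ^ 2 = n * ∑ a, x a ^ 2 := by
    have hshift_sq : ∀ i, ∑ t, x (t - s i) ^ 2 = ∑ a, x a ^ 2 := fun i =>
      (Equiv.subRight (s i)).sum_comp (x · ^ 2)
    rw [Finset.sum_comm]
    simp only [hshift_sq, Finset.sum_const, Finset.card_univ, Fintype.card_fin, nsmul_eq_mul]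
  rw [Finset.sum_sub_distrib, ← Finset.mul_sum, total] at within
  rw [regroup]
  have hn' : (0 : ℝ) < n := by exact_mod_cast hn
  nlinarith

lemma exists_shifts_forall_le_sum_sq_sub {n : ℕ} (hn : 0 < n) (y : G → ℝ) :
    ∃ s : Fin n → G, ∀ g : G → ℝ,
      (n - 1) * ∑ a, (y a - (∑ b, y b) / Fintype.card G) ^ 2 ≤
        ∑ a, ∑ i, (y a - g (a + s i)) ^ 2 := by
  set μ := (∑ b, y b) / Fintype.card G
  have hcard : (Fintype.card G : ℝ) ≠ 0 := by positivity
  have hcentred : ∑ a, (y a - μ) = 0 := by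
    simp only [μ, Finset.sum_sub_distrib, Finset.sum_const, Finset.card_univ, nsmul_eq_mul]
    field_simp
    ring
  obtain ⟨s, hs⟩ := exists_shifts_sum_sq_le hcentred n
  refine ⟨s, fun g => ?_⟩
  simpa using sum_sq_sub_shift_ge hn (fun a => y a - μ) hs (fun t => g t - μ)

end Shifts

section Uniform

variable {α β : Type*} [Fintype α] [Fintype β]

lemma pexp_const (c : ℝ) (f : α → ℝ) : pexp (fun _ => c) f = c * ∑ ω, f ω :=
  (Finset.mul_sum _ _ _).symm

lemma pexp_uniform_fst [Nonempty β] {c : ℝ} (hc : Fintype.card α * Fintype.card β = c)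
    (f : α → ℝ) : pexp (fun _ : α × β => 1 / c) (fun ω => f ω.1) = (∑ a, f a) / Fintype.card α := by
  have hβ : (Fintype.card β : ℝ) ≠ 0 := by positivity
  rw [pexp_const, Fintype.sum_prod_type, ← hc]
  simp only [Finset.sum_const, Finset.card_univ, nsmul_eq_mul, ← Finset.mul_sum]
  field_simp

lemma pvar_uniform_fst [Nonempty β] {c : ℝ} (hc : Fintype.card α * Fintype.card β = c)
    (f : α → ℝ) : pvar (fun _ : α × β => 1 / c) (fun ω => f ω.1) =
      (∑ a, (f a - (∑ b, f b) / Fintype.card α) ^ 2) / Fintype.card α := by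
  rw [pvar, pexp_uniform_fst hc, pexp_uniform_fst hc fun a => (f a - _) ^ 2]

end Uniform

lemma le_pmmse {Ω T : Type*} [Fintype Ω] {p : Ω → ℝ} {Y : Ω → ℝ} {τ : Ω → T} {c : ℝ}
    (hc : ∀ h : T → ℝ, c ≤ pexp p fun ω => (Y ω - h (τ ω)) ^ 2) : c ≤ pmmse p Y τ :=
  le_csInf ⟨_, 0, rfl⟩ fun _ ⟨h, he⟩ => he ▸ hc h

/-- For `Y` uniform on an `m`-element real alphabet and `k` bits of shared key, there is a
block-length-one encoding, decodable given the key, whose distortion gap is at most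
`var(Y)/2^k`. -/
theorem stmt9 (m k : ℕ) (hm : 0 < m) (y : Fin m → ℝ) :
    ∃ e : Fin m → Fin (2 ^ k) → Fin m,
      (∀ i : Fin (2 ^ k), Function.Injective (fun a => e a i)) ∧
      pvar (fun _ : Fin m × Fin (2 ^ k) => 1 / (m * 2 ^ k)) (fun ω => y ω.1) -
          pmmse (fun _ : Fin m × Fin (2 ^ k) => 1 / (m * 2 ^ k)) (fun ω => y ω.1)
            (fun ω => e ω.1 ω.2) ≤
        pvar (fun _ : Fin m × Fin (2 ^ k) => 1 / (m * 2 ^ k)) (fun ω => y ω.1) / 2 ^ k := by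
  have : NeZero m := ⟨hm.ne'⟩
  have hcard : (Fintype.card (Fin m) : ℝ) * Fintype.card (Fin (2 ^ k)) = m * 2 ^ k := by simp
  obtain ⟨s, hs⟩ := exists_shifts_forall_le_sum_sq_sub (n := 2 ^ k) (by positivity) y
  refine ⟨fun a i => a + s i, fun i => add_left_injective (s i), ?_⟩
  set Q := ∑ a, (y a - (∑ b, y b) / m) ^ 2
  have hvar : pvar (fun _ : Fin m × Fin (2 ^ k) => 1 / (m * 2 ^ k)) (fun ω => y ω.1) = Q / m := by
    simpa using pvar_uniform_fst hcard y
  have hmmse : ((2 : ℝ) ^ k - 1) * Q / (m * 2 ^ k) ≤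
      pmmse (fun _ : Fin m × Fin (2 ^ k) => 1 / (m * 2 ^ k)) (fun ω => y ω.1)
        (fun ω => ω.1 + s ω.2) := by
    refine le_pmmse fun h => ?_
    rw [pexp_const, Fintype.sum_prod_type, one_div_mul_eq_div]
    gcongr
    simpa using hs h
  rw [hvar]
  have hm' : (m : ℝ) ≠ 0 := by positivity
  have : Q / m / 2 ^ k = Q / m - ((2 : ℝ) ^ k - 1) * Q / (m * 2 ^ k) := by
    field_simp
    ring
  linarith
end

section
/- For a single source with k shared key bits and Y uniform on an m-element real alphabet of diameter d = max y − min y, there exists a decodable block-length-one encoding with var(Y) − MMSE_Eve ≤ d²/2^{2k}. -/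
/-!
Let `ρ` be the permutation of the alphabet exchanging the `r`-th smallest and the `r`-th largest
symbol. Then the spread of `y + y ∘ ρ` is at most that of `y`, so by induction there are `2 ^ k`
permutations `π i` with `∑ i, y ∘ π i` of spread at most `d`. Encrypting `a` under key `i` as
`(π i)⁻¹ a`, Eve's conditional mean of `Y` given the ciphertext `t` is the average of the
`y (π i t)`, whose spread is at most `d / 2 ^ k`; by the law of total variance,
`var Y - MMSE = var E[Y | X] ≤ (d / 2 ^ k) ^ 2`.
-/

open Finset

section Orthogonality

variable {Ω T : Type*} [Fintype Ω] {p : Ω → ℝ} {Y : Ω → ℝ} {τ : Ω → T} {w : T → ℝ}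

/- In the hypotheses `hw` below, `w ∘ τ` is a version of `E[Y | τ]`: `Y - w ∘ τ` is orthogonal to
every function of `τ`. -/

theorem pexp_sq_sub_eq_add_of_orthogonal
    (hw : ∀ g : T → ℝ, pexp p (fun ω => (Y ω - w (τ ω)) * g (τ ω)) = 0) (h : T → ℝ) :
    pexp p (fun ω => (Y ω - h (τ ω)) ^ 2) =
      pexp p (fun ω => (Y ω - w (τ ω)) ^ 2) + pexp p (fun ω => (w (τ ω) - h (τ ω)) ^ 2) := by
  have hcross := hw (fun t => 2 * (w t - h t))
  simp only [pexp] at hcross ⊢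
  rw [← sub_eq_zero, ← hcross, ← sum_add_distrib, ← sum_sub_distrib]
  exact sum_congr rfl fun ω _ => by ring

theorem pmmse_eq_of_orthogonal (hp : ∀ ω, 0 ≤ p ω)
    (hw : ∀ g : T → ℝ, pexp p (fun ω => (Y ω - w (τ ω)) * g (τ ω)) = 0) :
    pmmse p Y τ = pexp p (fun ω => (Y ω - w (τ ω)) ^ 2) := by
  refine IsLeast.csInf_eq ⟨⟨w, rfl⟩, ?_⟩
  rintro _ ⟨h, rfl⟩
  rw [pexp_sq_sub_eq_add_of_orthogonal hw h, le_add_iff_nonneg_right]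
  exact sum_nonneg fun ω _ => mul_nonneg (hp ω) (sq_nonneg _)

theorem pvar_sub_pmmse_eq_of_orthogonal (hp : ∀ ω, 0 ≤ p ω)
    (hw : ∀ g : T → ℝ, pexp p (fun ω => (Y ω - w (τ ω)) * g (τ ω)) = 0) :
    pvar p Y - pmmse p Y τ = pvar p (fun ω => w (τ ω)) := by
  have hmean : pexp p Y = pexp p (fun ω => w (τ ω)) := by
    have h1 := hw (fun _ => 1)
    simp only [pexp, mul_one, mul_sub, sum_sub_distrib] at h1 ⊢
    linarith
  rw [pmmse_eq_of_orthogonal hp hw, pvar, pvar, ← hmean,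
    pexp_sq_sub_eq_add_of_orthogonal (h := fun _ => pexp p Y) hw, add_sub_cancel_left]

end Orthogonality

theorem pexp_le_of_forall_le {Ω : Type*} [Fintype Ω] {p g : Ω → ℝ} {D : ℝ}
    (hp : ∀ ω, 0 ≤ p ω) (hp1 : ∑ ω, p ω = 1) (hg : ∀ ω, g ω ≤ D) : pexp p g ≤ D :=
  calc pexp p g ≤ ∑ ω, p ω * D := sum_le_sum fun ω _ => mul_le_mul_of_nonneg_left (hg ω) (hp ω)
    _ = D := by rw [← sum_mul, hp1, one_mul]

theorem pvar_le_sq_of_forall_sub_le {Ω : Type*} [Fintype Ω] {p f : Ω → ℝ} {D : ℝ}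
    (hp : ∀ ω, 0 ≤ p ω) (hp1 : ∑ ω, p ω = 1) (hf : ∀ ω ω', f ω - f ω' ≤ D) :
    pvar p f ≤ D ^ 2 := by
  have hconst : ∀ c, ∑ ω, p ω * c = c := fun c => by rw [← sum_mul, hp1, one_mul]
  refine pexp_le_of_forall_le hp hp1 fun ω => sq_le_sq' ?_ ?_
  · have := pexp_le_of_forall_le hp hp1 fun ω' => hf ω' ω
    simp only [pexp, mul_sub, sum_sub_distrib, hconst] at this ⊢
    linarith
  · have := pexp_le_of_forall_le hp hp1 (hf ω)
    simp only [pexp, mul_sub, sum_sub_distrib, hconst] at this ⊢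
    linarith

theorem Monotone.add_rev_sub_add_rev_le {n : ℕ} {g : Fin n → ℝ} (hg : Monotone g) {D : ℝ}
    (hD : ∀ a b, g a - g b ≤ D) (u v : Fin n) :
    g u + g u.rev - (g v + g v.rev) ≤ D := by
  rcases le_total u v with h | h
  · linarith [hg h, hD u.rev v.rev]
  · linarith [hg (Fin.rev_le_rev.mpr h), hD u v]

noncomputable def rankReflection {n : ℕ} (z : Fin n → ℝ) : Equiv.Perm (Fin n) :=
  Tuple.sort z * Fin.revPerm * (Tuple.sort z)⁻¹

theorem add_rankReflection_sub_le {n : ℕ} {z : Fin n → ℝ} {D : ℝ}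
    (hz : ∀ s t, z s - z t ≤ D) (s t : Fin n) :
    z s + z (rankReflection z s) - (z t + z (rankReflection z t)) ≤ D := by
  set σ := Tuple.sort z
  have hrank : ∀ s, z s + z (rankReflection z s) = (z ∘ σ) (σ⁻¹ s) + (z ∘ σ) (σ⁻¹ s).rev :=
    fun s => by simp [rankReflection, σ, Equiv.Perm.mul_apply]
  rw [hrank, hrank]
  exact (Tuple.monotone_sort z).add_rev_sub_add_rev_le (fun a b => hz _ _) _ _

theorem exists_perm_family_sum_sub_le {n : ℕ} (k : ℕ) :
    ∀ (z : Fin n → ℝ) {D : ℝ}, (∀ s t, z s - z t ≤ D) →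
      ∃ π : Fin (2 ^ k) → Equiv.Perm (Fin n), ∀ s t, ∑ i, z (π i s) - ∑ i, z (π i t) ≤ D := by
  induction k with
  | zero => exact fun z D hz => ⟨fun _ => 1, fun s t => by simpa using hz s t⟩
  | succ k ih =>
    intro z D hz
    obtain ⟨π, hπ⟩ := ih (fun s => z s + z (rankReflection z s)) (add_rankReflection_sub_le hz)
    let e : Fin (2 ^ k) ⊕ Fin (2 ^ k) ≃ Fin (2 ^ (k + 1)) :=
      finSumFinEquiv.trans (finCongr (by ring))
    let π' : Fin (2 ^ k) ⊕ Fin (2 ^ k) → Equiv.Perm (Fin n) :=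
      Sum.elim π fun i => (π i).trans (rankReflection z)
    refine ⟨fun j => π' (e.symm j), fun s t => ?_⟩
    have hsplit : ∀ s, ∑ j, z (π' (e.symm j) s) =
        ∑ i, (z (π i s) + z (rankReflection z (π i s))) := fun s => by
      rw [← e.sum_comp]
      simp [π', Fintype.sum_sum_type, sum_add_distrib]
    simpa only [hsplit] using hπ s t

theorem pexp_const_perm_family_orthogonal {α ι : Type*} [Fintype α] [Fintype ι] [Nonempty ι]
    (π : ι → Equiv.Perm α) (y : α → ℝ) (c : ℝ) (g : α → ℝ) :
    pexp (fun _ : α × ι => c) (fun ω => (y ω.1 -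
        (∑ i, y (π i ((π ω.2).symm ω.1))) / Fintype.card ι) * g ((π ω.2).symm ω.1)) = 0 := by
  set w : α → ℝ := fun t => (∑ i, y (π i t)) / Fintype.card ι
  have hcard : (Fintype.card ι : ℝ) ≠ 0 := by positivity
  calc _ = c * ∑ i, ∑ t, (y (π i t) - w t) * g t := by
        rw [pexp, ← mul_sum, Fintype.sum_prod_type, sum_comm]
        refine congrArg _ (sum_congr rfl fun i _ => ?_)
        rw [← Equiv.sum_comp (π i)]
        simp [w]
    _ = c * ∑ t, g t * (∑ i, y (π i t) - Fintype.card ι * w t) := by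
        rw [sum_comm]
        refine congrArg _ (sum_congr rfl fun t _ => ?_)
        rw [← sum_mul, sum_sub_distrib, sum_const, card_univ, nsmul_eq_mul, mul_comm]
    _ = 0 := by simp [w, mul_div_cancel₀ _ hcard]

/-- For `Y` uniform on an `m`-element real alphabet of diameter `d` and `k` bits of shared
key, there is a decodable block-length-one encoding with distortion gap at most `d²/2^{2k}`. -/
theorem stmt10 (m k : ℕ) (hm : 0 < m) (y : Fin m → ℝ) :
    let d : ℝ := (Finset.univ.sup' ⟨⟨0, hm⟩, Finset.mem_univ _⟩ y) -
      (Finset.univ.inf' ⟨⟨0, hm⟩, Finset.mem_univ _⟩ y)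
    ∃ e : Fin m → Fin (2 ^ k) → Fin m,
      (∀ i : Fin (2 ^ k), Function.Injective (fun a => e a i)) ∧
      pvar (fun _ : Fin m × Fin (2 ^ k) => 1 / (m * 2 ^ k)) (fun ω => y ω.1) -
          pmmse (fun _ : Fin m × Fin (2 ^ k) => 1 / (m * 2 ^ k)) (fun ω => y ω.1)
            (fun ω => e ω.1 ω.2) ≤
        d ^ 2 / 2 ^ (2 * k) := by
  intro d
  have hy : ∀ s t, y s - y t ≤ d := fun s t =>
    sub_le_sub (le_sup' y (mem_univ s)) (inf'_le y (mem_univ t))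
  obtain ⟨π, hπ⟩ := exists_perm_family_sum_sub_le k y hy
  refine ⟨fun a i => (π i).symm a, fun i => (π i).symm.injective, ?_⟩
  have hp : ∀ ω : Fin m × Fin (2 ^ k), (0 : ℝ) ≤ 1 / (m * 2 ^ k) := fun _ => by positivity
  have hp1 : ∑ _ω : Fin m × Fin (2 ^ k), (1 : ℝ) / (m * 2 ^ k) = 1 := by
    rw [sum_const, card_univ, Fintype.card_prod, Fintype.card_fin, Fintype.card_fin, nsmul_eq_mul]
    push_cast
    field_simp
  rw [pvar_sub_pmmse_eq_of_orthogonal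
    (w := fun t => (∑ i, y (π i t)) / Fintype.card (Fin (2 ^ k))) hp
    (pexp_const_perm_family_orthogonal π y _)]
  calc _ ≤ (d / 2 ^ k) ^ 2 := pvar_le_sq_of_forall_sub_le hp hp1 fun ω ω' => by
        simp only [Fintype.card_fin, Nat.cast_pow, Nat.cast_ofNat, ← sub_div]
        exact div_le_div_of_nonneg_right (hπ _ _) (by positivity)
    _ = d ^ 2 / 2 ^ (2 * k) := by ring
end

section
/- Merging bins cannot decrease Eve's distortion: if τ' is a function of τ, then min over ĥ of E[(Y − ĥ(τ'))²] ≥ min over ĥ of E[(Y − ĥ(τ))²]. Consequently, an optimal encoding has at most one bin with N_j ≤ 2^{k−1} (any two such bins could be merged without violating decodability while not decreasing distortion). -/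
open Finset

/-- Data processing for MMSE: post-processing the observation cannot decrease the MMSE. -/
lemma pmmse_comp_le {Ω T T' : Type*} [Fintype Ω] (p Y : Ω → ℝ) (hp : ∀ ω, 0 ≤ p ω)
    (τ : Ω → T) (φ : T → T') :
    pmmse p Y τ ≤ pmmse p Y (fun ω => φ (τ ω)) := by
  apply csInf_le_csInf
  · refine ⟨0, ?_⟩
    rintro x ⟨h, rfl⟩
    exact Finset.sum_nonneg fun ω _ => mul_nonneg (hp ω) (sq_nonneg _)
  · exact ⟨_, fun _ => 0, rfl⟩
  · rintro x ⟨h, rfl⟩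
    exact ⟨fun t => h (φ t), rfl⟩

/-- MMSE is invariant under a measure-preserving relabelling of the sample space
that fixes `Y`. -/
lemma pmmse_comp_equiv {Ω T : Type*} [Fintype Ω] (p Y : Ω → ℝ) (τ : Ω → T) (g : Ω ≃ Ω)
    (hp : ∀ ω, p (g ω) = p ω) (hY : ∀ ω, Y (g ω) = Y ω) :
    pmmse p Y (fun ω => τ (g ω)) = pmmse p Y τ := by
  have key : ∀ h : T → ℝ, pexp p (fun ω => (Y ω - h (τ (g ω))) ^ 2)
      = pexp p (fun ω => (Y ω - h (τ ω)) ^ 2) := by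
    intro h
    unfold pexp
    calc ∑ ω, p ω * (Y ω - h (τ (g ω))) ^ 2
        = ∑ ω, (fun ω => p ω * (Y ω - h (τ ω)) ^ 2) (g ω) :=
          Finset.sum_congr rfl fun ω _ => by simp only [hp, hY]
      _ = ∑ ω, p ω * (Y ω - h (τ ω)) ^ 2 :=
          Equiv.sum_comp g (fun ω => p ω * (Y ω - h (τ ω)) ^ 2)
  unfold pmmse
  congr 1
  ext x
  simp only [Set.mem_setOf_eq]
  constructor
  · rintro ⟨h, rfl⟩; exact ⟨h, (key h)⟩
  · rintro ⟨h, rfl⟩; exact ⟨h, (key h).symm⟩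

lemma card_filter_perm {n : ℕ} (σ : Equiv.Perm (Fin n)) (P : Fin n → Prop) [DecidablePred P] :
    (univ.filter fun i => P (σ i)).card = (univ.filter P).card := by
  apply Finset.card_bij (fun i _ => σ i)
  · intro a ha; simp only [mem_filter, mem_univ, true_and] at ha ⊢; exact ha
  · intro a _ b _ hab; exact σ.injective hab
  · intro b hb
    refine ⟨σ.symm b, ?_, by simp⟩
    simp only [mem_filter, mem_univ, true_and] at hb ⊢
    simpa using hb

/-- Kempe-chain rearrangement: if the total number of cells labelled `j₁` or `j₂` is at
most the number of columns, then the rows of `e` can be permuted (each row separately)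
so that columns stay injective and no column contains both a `j₁`-cell and a `j₂`-cell. -/
lemma kempe {m n r : ℕ} (j₁ j₂ : Fin r) (hj : j₁ ≠ j₂) :
    ∀ (N : ℕ) (e : Fin m → Fin n → Fin r),
      (∀ i, Function.Injective fun a => e a i) →
      ((∑ a, (univ.filter fun i => e a i = j₁).card)
        + (∑ a, (univ.filter fun i => e a i = j₂).card) ≤ n) →
      (univ.filter fun i : Fin n => (∃ a, e a i = j₁) ∧ ∃ a, e a i = j₂).card ≤ N →
      ∃ σ : Fin m → Equiv.Perm (Fin n),
        (∀ i, Function.Injective fun a => e a (σ a i)) ∧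
        ∀ i : Fin n, ¬((∃ a, e a (σ a i) = j₁) ∧ ∃ a, e a (σ a i) = j₂) := by
  classical
  intro N
  induction N with
  | zero =>
    intro e hinj _ hc
    refine ⟨fun _ => Equiv.refl _, by simpa using hinj, fun i => ?_⟩
    intro h
    have := Finset.card_eq_zero.mp (Nat.le_zero.mp hc)
    have hi : i ∈ (univ.filter fun i : Fin n => (∃ a, e a i = j₁) ∧ ∃ a, e a i = j₂) := by
      simp only [mem_filter, mem_univ, true_and]
      simpa using h
    rw [this] at hi
    exact absurd hi (Finset.notMem_empty i)
  | succ N ih =>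
    intro e hinj hcnt hc
    by_cases h0 : (univ.filter fun i : Fin n => (∃ a, e a i = j₁) ∧ ∃ a, e a i = j₂) = ∅
    · refine ⟨fun _ => Equiv.refl _, by simpa using hinj, fun i hcontra => ?_⟩
      have hi : i ∈ (univ.filter fun i : Fin n => (∃ a, e a i = j₁) ∧ ∃ a, e a i = j₂) := by
        simp only [mem_filter, mem_univ, true_and]
        simpa using hcontra
      rw [h0] at hi
      exact absurd hi (Finset.notMem_empty i)
    -- there is a conflict column i
    obtain ⟨i, hi⟩ := Finset.nonempty_of_ne_empty h0
    have hiP := (mem_filter.mp hi).2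
    obtain ⟨⟨a₀, ha₀⟩, ⟨b, hb⟩⟩ := hiP
    -- counting: find a free column i'
    set C₁ := univ.filter (fun i : Fin n => ∃ a, e a i = j₁) with hC₁
    set C₂ := univ.filter (fun i : Fin n => ∃ a, e a i = j₂) with hC₂
    have hswap : ∀ j : Fin r, (∑ a, (univ.filter fun i => e a i = j).card)
        = ∑ i, (univ.filter fun a => e a i = j).card := by
      intro j
      simp only [Finset.card_filter]
      exact Finset.sum_comm
    have hcard₁ : C₁.card ≤ ∑ i, (univ.filter fun a => e a i = j₁).card := by
      rw [hC₁, Finset.card_filter]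
      apply Finset.sum_le_sum
      intro i _
      split
      · rename_i hP
        obtain ⟨a, ha⟩ := hP
        exact Finset.card_pos.mpr ⟨a, by simp [ha]⟩
      · exact Nat.zero_le _
    have hcard₂ : C₂.card ≤ ∑ i, (univ.filter fun a => e a i = j₂).card := by
      rw [hC₂, Finset.card_filter]
      apply Finset.sum_le_sum
      intro i _
      split
      · rename_i hP
        obtain ⟨a, ha⟩ := hP
        exact Finset.card_pos.mpr ⟨a, by simp [ha]⟩
      · exact Nat.zero_le _
    have hinter : i ∈ C₁ ∩ C₂ := by
      simp only [hC₁, hC₂, Finset.mem_inter, mem_filter, mem_univ, true_and]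
      exact ⟨⟨a₀, ha₀⟩, ⟨b, hb⟩⟩
    have hunion : (C₁ ∪ C₂).card + (C₁ ∩ C₂).card = C₁.card + C₂.card :=
      Finset.card_union_add_card_inter C₁ C₂
    have hlt : (C₁ ∪ C₂).card < n := by
      have h1 : 1 ≤ (C₁ ∩ C₂).card := Finset.card_pos.mpr ⟨i, hinter⟩
      have := hswap j₁
      have := hswap j₂
      omega
    have hex : ∃ i' : Fin n, i' ∉ C₁ ∪ C₂ := by
      by_contra hcon
      push_neg at hcon
      have : (C₁ ∪ C₂) = univ := Finset.eq_univ_iff_forall.mpr hcon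
      rw [this, Finset.card_univ, Fintype.card_fin] at hlt
      omega
    obtain ⟨i', hi'⟩ := hex
    have hfree₁ : ∀ a, e a i' ≠ j₁ := by
      intro a ha
      exact hi' (Finset.mem_union_left _
        (by simp only [hC₁, mem_filter, mem_univ, true_and]; exact ⟨a, ha⟩))
    have hfree₂ : ∀ a, e a i' ≠ j₂ := by
      intro a ha
      exact hi' (Finset.mem_union_right _
        (by simp only [hC₂, mem_filter, mem_univ, true_and]; exact ⟨a, ha⟩))
    have hii' : i ≠ i' := by
      rintro rfl
      exact hfree₁ a₀ ha₀
    -- the Kempe chain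
    set step : Fin m → Fin m → Prop := fun x y => e y i = e x i' with hstepdef
    set S : Finset (Fin m) := univ.filter (fun a => Relation.ReflTransGen step b a) with hS
    have hbS : b ∈ S := by
      simp only [hS, mem_filter, mem_univ, true_and]
      exact Relation.ReflTransGen.refl
    have hclosure₁ : ∀ a ∈ S, ∀ a', e a' i = e a i' → a' ∈ S := by
      intro a haS a' h
      have hr : Relation.ReflTransGen step b a := (mem_filter.mp haS).2
      simp only [hS, mem_filter, mem_univ, true_and]
      exact hr.tail h
    have hclosure₂ : ∀ a ∈ S, ∀ a', e a' i' = e a i → a' ∈ S := by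
      intro a haS a' h
      have hr : Relation.ReflTransGen step b a := (mem_filter.mp haS).2
      rcases Relation.ReflTransGen.cases_tail hr with heq | ⟨c, hc, hst⟩
      · -- a = b
        subst heq
        exact absurd (h.trans hb) (hfree₂ a')
      · -- hst : step c a, i.e. e a i = e c i'
        have : e a' i' = e c i' := h.trans hst
        have : a' = c := hinj i' this
        subst this
        simp only [hS, mem_filter, mem_univ, true_and]
        exact hc
    have ha₀S : a₀ ∉ S := by
      intro h
      have hr : Relation.ReflTransGen step b a₀ := (mem_filter.mp h).2
      rcases Relation.ReflTransGen.cases_tail hr with heq | ⟨c, hc, hst⟩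
      · subst heq; exact hj (ha₀.symm.trans hb)
      · exact hfree₁ c (hst.symm.trans ha₀)
    -- the per-row swap
    set τ : Fin m → Equiv.Perm (Fin n) := fun a => if a ∈ S then Equiv.swap i i' else Equiv.refl _
      with hτ
    set e₃ : Fin m → Fin n → Fin r := fun a i₀ => e a (τ a i₀) with he₃
    have hτ_in : ∀ a ∈ S, ∀ i₀, τ a i₀ = Equiv.swap i i' i₀ := by
      intro a haS i₀; simp [hτ, haS]
    have hτ_out : ∀ a, a ∉ S → ∀ i₀, τ a i₀ = i₀ := by
      intro a haS i₀; simp [hτ, haS]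
    have hinj₃ : ∀ i₀, Function.Injective fun a => e₃ a i₀ := by
      intro i₀ a a' hEq
      simp only [he₃] at hEq
      by_cases haS : a ∈ S <;> by_cases ha'S : a' ∈ S
      · rw [hτ_in a haS, hτ_in a' ha'S] at hEq
        exact hinj _ hEq
      · rw [hτ_in a haS, hτ_out a' ha'S] at hEq
        exfalso
        by_cases h1 : i₀ = i
        · subst h1
          rw [Equiv.swap_apply_left] at hEq
          exact ha'S (hclosure₁ a haS a' hEq.symm)
        by_cases h2 : i₀ = i'
        · subst h2
          rw [Equiv.swap_apply_right] at hEq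
          exact ha'S (hclosure₂ a haS a' hEq.symm)
        · rw [Equiv.swap_apply_of_ne_of_ne h1 h2] at hEq
          have : a = a' := hinj i₀ hEq
          subst this; exact ha'S haS
      · rw [hτ_out a haS, hτ_in a' ha'S] at hEq
        exfalso
        by_cases h1 : i₀ = i
        · subst h1
          rw [Equiv.swap_apply_left] at hEq
          exact haS (hclosure₁ a' ha'S a hEq)
        by_cases h2 : i₀ = i'
        · subst h2
          rw [Equiv.swap_apply_right] at hEq
          exact haS (hclosure₂ a' ha'S a hEq)
        · rw [Equiv.swap_apply_of_ne_of_ne h1 h2] at hEq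
          have : a = a' := hinj i₀ hEq
          subst this; exact haS ha'S
      · rw [hτ_out a haS, hτ_out a' ha'S] at hEq
        exact hinj i₀ hEq
    have hrow : ∀ a (j : Fin r), (univ.filter fun i₀ => e₃ a i₀ = j).card
        = (univ.filter fun i₀ => e a i₀ = j).card := by
      intro a j
      exact card_filter_perm (τ a) (fun i₀ => e a i₀ = j)
    have hcnt₃ : (∑ a, (univ.filter fun i₀ => e₃ a i₀ = j₁).card)
        + (∑ a, (univ.filter fun i₀ => e₃ a i₀ = j₂).card) ≤ n := by
      simp only [hrow]; exact hcnt
    -- no j₂ in column i of e₃, no j₁ in column i' of e₃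
    have hcoli : ∀ a, e₃ a i ≠ j₂ := by
      intro a ha
      simp only [he₃] at ha
      by_cases haS : a ∈ S
      · rw [hτ_in a haS, Equiv.swap_apply_left] at ha
        exact hfree₂ a ha
      · rw [hτ_out a haS] at ha
        have : a = b := hinj i (ha.trans hb.symm)
        subst this; exact haS hbS
    have hcoli' : ∀ a, e₃ a i' ≠ j₁ := by
      intro a ha
      simp only [he₃] at ha
      by_cases haS : a ∈ S
      · rw [hτ_in a haS, Equiv.swap_apply_right] at ha
        have : a = a₀ := hinj i (ha.trans ha₀.symm)
        subst this; exact ha₀S haS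
      · rw [hτ_out a haS] at ha
        exact hfree₁ a ha
    have hsub : (univ.filter fun i₀ : Fin n => (∃ a, e₃ a i₀ = j₁) ∧ ∃ a, e₃ a i₀ = j₂)
        ⊆ (univ.filter fun i₀ : Fin n => (∃ a, e a i₀ = j₁) ∧ ∃ a, e a i₀ = j₂).erase i := by
      intro i₀ hmem
      have hP := (mem_filter.mp hmem).2
      obtain ⟨⟨a₁, h₁⟩, ⟨a₂, h₂⟩⟩ := hP
      by_cases hcase1 : i₀ = i
      · subst hcase1; exact absurd h₂ (hcoli a₂)
      by_cases hcase2 : i₀ = i'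
      · subst hcase2; exact absurd h₁ (hcoli' a₁)
      · have hfix : ∀ a, e₃ a i₀ = e a i₀ := by
          intro a
          simp only [he₃]
          by_cases haS : a ∈ S
          · rw [hτ_in a haS, Equiv.swap_apply_of_ne_of_ne hcase1 hcase2]
          · rw [hτ_out a haS]
        rw [hfix] at h₁ h₂
        refine Finset.mem_erase.mpr ⟨hcase1, ?_⟩
        simp only [mem_filter, mem_univ, true_and]
        exact ⟨⟨a₁, h₁⟩, ⟨a₂, h₂⟩⟩
    have hc₃ : (univ.filter fun i₀ : Fin n => (∃ a, e₃ a i₀ = j₁) ∧ ∃ a, e₃ a i₀ = j₂).card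
        ≤ N := by
      have h1 := Finset.card_le_card hsub
      have h2 : ((univ.filter fun i₀ : Fin n =>
            (∃ a, e a i₀ = j₁) ∧ ∃ a, e a i₀ = j₂).erase i).card
          = (univ.filter fun i₀ : Fin n => (∃ a, e a i₀ = j₁) ∧ ∃ a, e a i₀ = j₂).card - 1 :=
        Finset.card_erase_of_mem hi
      have h3 : 1 ≤ (univ.filter fun i₀ : Fin n => (∃ a, e a i₀ = j₁) ∧ ∃ a, e a i₀ = j₂).card :=
        Finset.card_pos.mpr ⟨i, hi⟩
      omega
    obtain ⟨σ, hσinj, hσconf⟩ := ih e₃ hinj₃ hcnt₃ hc₃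
    refine ⟨fun a => (σ a).trans (τ a), ?_, ?_⟩
    · intro i₀
      have := hσinj i₀
      simpa only [he₃, Equiv.trans_apply] using this
    · intro i₀
      have := hσconf i₀
      simpa only [he₃, Equiv.trans_apply] using this

/-- Merging bins cannot decrease Eve's distortion. First, the data-processing fact: if `τ'`
is a function of `τ`, the MMSE from `τ'` is at least the MMSE from `τ`. Consequently, two
bins of multiplicity at most `2^{k-1}` can be merged into one, preserving decodability and
not decreasing Eve's distortion. -/
theorem stmt12 (m k r : ℕ) (hk : 1 ≤ k) (hm : 0 < m) (y : Fin m → ℝ) :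
    (∀ (Ω T T' : Type) (_ : Fintype Ω) (p : Ω → ℝ), (∀ ω, 0 ≤ p ω) → (∑ ω, p ω = 1) →
      ∀ (Y : Ω → ℝ) (τ : Ω → T) (φ : T → T'),
        pmmse p Y τ ≤ pmmse p Y (fun ω => φ (τ ω))) ∧
    (∀ (e : Fin m → Fin (2 ^ k) → Fin r),
      (∀ i : Fin (2 ^ k), Function.Injective (fun a => e a i)) →
      ∀ j₁ j₂ : Fin r, j₁ ≠ j₂ →
      (∑ a : Fin m, (Finset.univ.filter (fun i : Fin (2 ^ k) => e a i = j₁)).card ≤ 2 ^ (k - 1)) →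
      (∑ a : Fin m, (Finset.univ.filter (fun i : Fin (2 ^ k) => e a i = j₂)).card ≤ 2 ^ (k - 1)) →
      ∃ e' : Fin m → Fin (2 ^ k) → Fin r,
        (∀ i : Fin (2 ^ k), Function.Injective (fun a => e' a i)) ∧
        (∀ a : Fin m, ∀ j : Fin r, j ≠ j₁ → j ≠ j₂ →
          (Finset.univ.filter (fun i : Fin (2 ^ k) => e' a i = j)).card =
            (Finset.univ.filter (fun i : Fin (2 ^ k) => e a i = j)).card) ∧
        (∀ a : Fin m,
          (Finset.univ.filter (fun i : Fin (2 ^ k) => e' a i = j₁)).card =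
            (Finset.univ.filter (fun i : Fin (2 ^ k) => e a i = j₁)).card +
            (Finset.univ.filter (fun i : Fin (2 ^ k) => e a i = j₂)).card) ∧
        (∀ a : Fin m, (Finset.univ.filter (fun i : Fin (2 ^ k) => e' a i = j₂)).card = 0) ∧
        pmmse (fun _ : Fin m × Fin (2 ^ k) => 1 / (m * 2 ^ k)) (fun ω => y ω.1)
            (fun ω => e ω.1 ω.2) ≤
          pmmse (fun _ : Fin m × Fin (2 ^ k) => 1 / (m * 2 ^ k)) (fun ω => y ω.1)
            (fun ω => e' ω.1 ω.2)) := by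
  constructor
  · intro Ω T T' _ p hp _ Y τ φ
    exact pmmse_comp_le p Y hp τ φ
  · intro e hinj j₁ j₂ hj h₁ h₂
    have hcnt : (∑ a, (univ.filter fun i : Fin (2 ^ k) => e a i = j₁).card)
        + (∑ a, (univ.filter fun i : Fin (2 ^ k) => e a i = j₂).card) ≤ 2 ^ k := by
      have h2 : 2 ^ (k - 1) + 2 ^ (k - 1) = 2 ^ k := by
        rw [← two_mul, ← pow_succ', Nat.sub_add_cancel hk]
      omega
    obtain ⟨σ, hσinj, hσconf⟩ := kempe j₁ j₂ hj _ e hinj hcnt (le_refl _)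
    set ψ : Fin r → Fin r := fun j => if j = j₂ then j₁ else j with hψ
    refine ⟨fun a i => ψ (e a (σ a i)), ?_, ?_, ?_, ?_, ?_⟩
    · -- injectivity of columns
      intro i a a' hEq
      simp only [hψ] at hEq
      by_cases hx : e a (σ a i) = j₂ <;> by_cases hx' : e a' (σ a' i) = j₂
      · exact hσinj i (hx.trans hx'.symm)
      · rw [if_pos hx, if_neg hx'] at hEq
        exact absurd ⟨⟨a', hEq.symm⟩, ⟨a, hx⟩⟩ (hσconf i)
      · rw [if_neg hx, if_pos hx'] at hEq
        exact absurd ⟨⟨a, hEq⟩, ⟨a', hx'⟩⟩ (hσconf i)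
      · rw [if_neg hx, if_neg hx'] at hEq
        exact hσinj i hEq
    · -- counts for other bins
      intro a j hj1 hj2
      have hstep1 : (univ.filter fun i : Fin (2 ^ k) => ψ (e a (σ a i)) = j)
          = (univ.filter fun i : Fin (2 ^ k) => e a (σ a i) = j) := by
        apply Finset.filter_congr
        intro i _
        by_cases hx : e a (σ a i) = j₂
        · simp only [hψ, if_pos hx]
          constructor
          · intro h; exact absurd h.symm hj1
          · intro h; exact absurd (h.symm.trans hx) hj2
        · simp only [hψ, if_neg hx]
      rw [hstep1]
      exact card_filter_perm (σ a) (fun i => e a i = j)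
    · -- count for the merged bin j₁
      intro a
      have hstep : (univ.filter fun i : Fin (2 ^ k) => ψ (e a (σ a i)) = j₁)
          = (univ.filter fun i : Fin (2 ^ k) => e a (σ a i) = j₁)
            ∪ (univ.filter fun i : Fin (2 ^ k) => e a (σ a i) = j₂) := by
        rw [← Finset.filter_or]
        apply Finset.filter_congr
        intro i _
        by_cases hx : e a (σ a i) = j₂
        · simp [hψ, hx]
        · simp only [hψ, if_neg hx]
          constructor
          · intro h; exact Or.inl h
          · rintro (h | h)
            · exact h
            · exact absurd h hx
      have hdisj : Disjoint (univ.filter fun i : Fin (2 ^ k) => e a (σ a i) = j₁)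
          (univ.filter fun i : Fin (2 ^ k) => e a (σ a i) = j₂) := by
        rw [Finset.disjoint_left]
        intro x hx1 hx2
        have e1 := (mem_filter.mp hx1).2
        have e2 := (mem_filter.mp hx2).2
        exact hj (e1.symm.trans e2)
      rw [hstep, Finset.card_union_of_disjoint hdisj,
        card_filter_perm (σ a) (fun i => e a i = j₁),
        card_filter_perm (σ a) (fun i => e a i = j₂)]
    · -- bin j₂ is empty
      intro a
      rw [Finset.card_eq_zero, Finset.filter_eq_empty_iff]
      intro i _
      by_cases hx : e a (σ a i) = j₂
      · simp only [hψ, if_pos hx]; exact hj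
      · simp only [hψ, if_neg hx]; exact hx
    · -- the distortion does not decrease
      let g : (Fin m × Fin (2 ^ k)) ≃ (Fin m × Fin (2 ^ k)) :=
        { toFun := fun ω => (ω.1, σ ω.1 ω.2)
          invFun := fun ω => (ω.1, (σ ω.1).symm ω.2)
          left_inv := fun ω => by simp
          right_inv := fun ω => by simp }
      refine le_trans (le_of_eq ?_)
        (pmmse_comp_le (fun _ : Fin m × Fin (2 ^ k) => 1 / (m * 2 ^ k)) (fun ω => y ω.1)
          (fun ω => by positivity) (fun ω => e ω.1 (σ ω.1 ω.2)) ψ)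
      have heq := pmmse_comp_equiv (fun _ : Fin m × Fin (2 ^ k) => 1 / ((m : ℝ) * 2 ^ k))
        (fun ω : Fin m × Fin (2 ^ k) => y ω.1) (fun ω : Fin m × Fin (2 ^ k) => e ω.1 ω.2) g
        (fun _ => rfl) (fun ω => rfl)
      exact heq.symm
end

section
/- If Y is uniform on a regularly spaced alphabet {y, y+d, y+2d, …, y+(m−1)d} and the encoding pairs y_j with y_{m+1−j} (one bit of key choosing which of the pair is the bin label), then every bin sum equals 2y + (m−1)d, hence E[Y | τ] = E[Y] for every transmitted symbol τ, and the encoding achieves perfect distortion security: Eve's MMSE equals var(Y). -/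
open Finset Function

section Orthogonality

variable {Ω T : Type*} [Fintype Ω] [DecidableEq T] {p : Ω → ℝ} {Y : Ω → ℝ} {τ : Ω → T} {c : ℝ}

lemma sum_fiber_mul_sub_eq_zero_of_pcond_eq (hp : ∀ ω, 0 ≤ p ω) {t : T}
    (ht : pcond p Y τ t = c) :
    ∑ ω ∈ univ.filter (fun ω => τ ω = t), p ω * (Y ω - c) = 0 := by
  subst ht
  by_cases hD : ∑ ω ∈ univ.filter (fun ω => τ ω = t), p ω = 0
  · have hzero := (sum_eq_zero_iff_of_nonneg fun ω _ => hp ω).1 hD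
    exact sum_eq_zero fun ω hω => by rw [hzero ω hω, zero_mul]
  · rw [pcond, sum_congr rfl fun ω _ => mul_sub (p ω) _ _, sum_sub_distrib, ← sum_mul,
      mul_div_cancel₀ _ hD, sub_self]

lemma pexp_sq_sub_comp_eq_of_pcond_eq (hp : ∀ ω, 0 ≤ p ω) (hcond : ∀ t, pcond p Y τ t = c)
    (h : T → ℝ) :
    pexp p (fun ω => (Y ω - h (τ ω)) ^ 2) =
      pexp p (fun ω => (Y ω - c) ^ 2) + pexp p (fun ω => (c - h (τ ω)) ^ 2) := by
  -- Orthogonality: `Y - c` integrates to zero on every fiber of `τ`, on which `c - h ∘ τ` is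
  -- constant.
  have hcross : ∑ ω, p ω * (Y ω - c) * (c - h (τ ω)) = 0 := by
    rw [← sum_fiberwise_of_maps_to (fun ω _ => mem_image_of_mem τ (mem_univ ω))]
    refine sum_eq_zero fun t _ => ?_
    rw [sum_congr rfl fun ω hω => by rw [(mem_filter.1 hω).2], ← sum_mul,
      sum_fiber_mul_sub_eq_zero_of_pcond_eq hp (hcond t), zero_mul]
  have hexpand : ∀ ω, p ω * (Y ω - h (τ ω)) ^ 2 = p ω * (Y ω - c) ^ 2 +
      p ω * (c - h (τ ω)) ^ 2 + 2 * (p ω * (Y ω - c) * (c - h (τ ω))) := fun ω => by ring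
  rw [pexp, sum_congr rfl fun ω _ => hexpand ω, sum_add_distrib, sum_add_distrib, ← mul_sum,
    hcross, mul_zero, add_zero, pexp, pexp]

lemma pmmse_eq_pvar_of_pcond_eq_pexp (hp : ∀ ω, 0 ≤ p ω)
    (hcond : ∀ t, pcond p Y τ t = pexp p Y) : pmmse p Y τ = pvar p Y := by
  have hlow : ∀ h : T → ℝ, pvar p Y ≤ pexp p (fun ω => (Y ω - h (τ ω)) ^ 2) := fun h => by
    rw [pexp_sq_sub_comp_eq_of_pcond_eq hp hcond h, pvar, le_add_iff_nonneg_right]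
    exact sum_nonneg fun ω _ => mul_nonneg (hp ω) (sq_nonneg _)
  have hmem : pvar p Y ∈ {e : ℝ | ∃ h : T → ℝ, e = pexp p (fun ω => (Y ω - h (τ ω)) ^ 2)} :=
    ⟨fun _ => pexp p Y, rfl⟩
  refine le_antisymm (csInf_le ⟨pvar p Y, ?_⟩ hmem) (le_csInf ⟨_, hmem⟩ ?_) <;>
    rintro _ ⟨h, rfl⟩ <;> exact hlow h

end Orthogonality

section KeyedPairing

variable {α : Type*} [Fintype α] {σ : α → α} (f : α → ℝ)

lemma filter_ite_key_eq [DecidableEq α] (hσ : Involutive σ) (t : α) :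
    univ.filter (fun ω : α × Bool => (if ω.2 then ω.1 else σ ω.1) = t) =
      {(t, true), (σ t, false)} := by
  ext ⟨a, b⟩
  cases b <;> simp [hσ.eq_iff]

lemma pcond_ite_key [DecidableEq α] (hσ : Involutive σ) {c : ℝ} (hc : c ≠ 0) (t : α) :
    pcond (fun _ => c) (fun ω : α × Bool => f ω.1) (fun ω => if ω.2 then ω.1 else σ ω.1) t =
      (f t + f (σ t)) / 2 := by
  rw [pcond, filter_ite_key_eq hσ, sum_pair (by simp), sum_pair (by simp)]
  field_simp
  ring

lemma pexp_const_fst (c : ℝ) : pexp (fun _ => c) (fun ω : α × Bool => f ω.1) = 2 * c * ∑ a, f a := by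
  simp only [pexp, Fintype.sum_prod_type, Fintype.sum_bool, mul_sum]
  exact sum_congr rfl fun a _ => by ring

end KeyedPairing

lemma sum_eq_card_mul_of_add_perm_eq {ι : Type*} [Fintype ι] (σ : Equiv.Perm ι) {f : ι → ℝ}
    {μ : ℝ} (h : ∀ i, f i + f (σ i) = 2 * μ) : ∑ i, f i = Fintype.card ι * μ := by
  have h2 : 2 * ∑ i, f i = 2 * (Fintype.card ι * μ) :=
    calc 2 * ∑ i, f i = ∑ i, (f i + f (σ i)) := by rw [sum_add_distrib, Equiv.sum_comp, two_mul]
      _ = 2 * (Fintype.card ι * μ) := by simp only [h, sum_const, card_univ, nsmul_eq_mul]; ring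
  linarith

lemma Fin.cast_val_rev {R : Type*} [AddGroupWithOne R] {m : ℕ} (j : Fin m) :
    ((Fin.rev j : ℕ) : R) = m - 1 - j := by
  rw [Fin.val_rev, Nat.cast_sub j.isLt, Nat.cast_succ, sub_add_eq_sub_sub_swap]

theorem stmt16_general (m : ℕ) (y d : ℝ) :
    let yv : Fin m → ℝ := fun j => y + j * d
    let p : Fin m × Bool → ℝ := fun _ => 1 / (2 * m)
    let Y : Fin m × Bool → ℝ := fun ω => yv ω.1
    let τ : Fin m × Bool → Fin m := fun ω => if ω.2 then ω.1 else Fin.rev ω.1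
    (∀ j : Fin m, yv j + yv (Fin.rev j) = 2 * y + ((m : ℝ) - 1) * d) ∧
    (∀ t : Fin m, pcond p Y τ t = pexp p Y) ∧
    pmmse p Y τ = pvar p Y := by
  intro yv p Y τ
  have hbin : ∀ j : Fin m, yv j + yv (Fin.rev j) = 2 * y + ((m : ℝ) - 1) * d := fun j => by
    simp only [yv, Fin.cast_val_rev]
    ring
  have hcond : ∀ t : Fin m, pcond p Y τ t = pexp p Y := fun t => by
    have hm : (m : ℝ) ≠ 0 := by exact_mod_cast t.pos.ne'
    have hsum := sum_eq_card_mul_of_add_perm_eq Fin.revPerm (f := yv)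
      (μ := y + ((m : ℝ) - 1) * d / 2) fun j => by rw [Fin.revPerm_apply, hbin]; ring
    rw [pcond_ite_key yv Fin.rev_involutive (by positivity) t, pexp_const_fst, hsum, hbin,
      Fintype.card_fin]
    field_simp
  exact ⟨hbin, hcond, pmmse_eq_pvar_of_pcond_eq_pexp (fun _ => by positivity) hcond⟩

/-- For a regularly spaced alphabet `y_j = y + (j−1)d`, pairing `y_j` with `y_{m+1−j}` using
one uniform key bit makes every bin sum equal to `2y + (m−1)d`, forces
`E[Y | τ] = E[Y]` for every transmitted symbol, and achieves perfect distortion security. -/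
theorem stmt16 (m : ℕ) (hm : 0 < m) (y d : ℝ) :
    let yv : Fin m → ℝ := fun j => y + j * d
    let p : Fin m × Bool → ℝ := fun _ => 1 / (2 * m)
    let Y : Fin m × Bool → ℝ := fun ω => yv ω.1
    let τ : Fin m × Bool → Fin m := fun ω => if ω.2 then ω.1 else Fin.rev ω.1
    (∀ j : Fin m, yv j + yv (Fin.rev j) = 2 * y + ((m : ℝ) - 1) * d) ∧
    (∀ t : Fin m, pcond p Y τ t = pexp p Y) ∧
    pmmse p Y τ = pvar p Y :=
  stmt16_general m y d
end

section
/- Necessity for sums: let X₁,…,X_n be independent and f(X) = Σ_{i=1}^n f_i(X_i), with each source encoded separately. If for some i the encoding g(X_i) fails to secure f_i(X_i) (i.e., E[f_i(X_i) | g(X_i)] is not a.s. constant), then f(X) is not perfectly distortion-secured: there is an observation value making E[f(X) | g(X)] ≠ E[f(X)]. -/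
open Finset

set_option linter.unusedSectionVars false

section aux
variable {Ω T : Type*} [Fintype Ω] [Fintype T] [DecidableEq T]

lemma null_fiber (p : Ω → ℝ) (hp0 : ∀ ω, 0 ≤ p ω) (Y : Ω → ℝ) (g : Ω → T) (t : T)
    (h : ∑ ω ∈ univ.filter (fun ω => g ω = t), p ω = 0) :
    ∑ ω ∈ univ.filter (fun ω => g ω = t), p ω * Y ω = 0 := by
  apply Finset.sum_eq_zero
  intro ω hω
  have := (Finset.sum_eq_zero_iff_of_nonneg (fun ω _ => hp0 ω)).mp h ω hω
  simp [this]

lemma exists_cond_gen (p : Ω → ℝ) (hp0 : ∀ ω, 0 ≤ p ω) (hp1 : ∑ ω, p ω = 1)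
    (F : Ω → ℝ) (g : Ω → T)
    (strictpt : ∃ t0, (∑ ω ∈ univ.filter (fun ω => g ω = t0), p ω) ≠ 0 ∧
      ¬ (pexp p F ≤ pcond p F g t0)) :
    ∃ t, (∑ ω ∈ univ.filter (fun ω => g ω = t), p ω) ≠ 0 ∧
      pexp p F < pcond p F g t := by
  by_contra hc
  push_neg at hc
  set m : T → ℝ := fun t => ∑ ω ∈ univ.filter (fun ω => g ω = t), p ω with hm
  set s : T → ℝ := fun t => ∑ ω ∈ univ.filter (fun ω => g ω = t), p ω * F ω with hs
  have hsumm : ∑ t, m t = 1 := by rw [hm]; simpa using (Finset.sum_fiberwise univ g p).trans hp1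
  have hsums : ∑ t, s t = pexp p F := by
    rw [hs]; simpa [pexp] using Finset.sum_fiberwise univ g (fun ω => p ω * F ω)
  set e := pexp p F with he
  have hle : ∀ t ∈ univ, s t ≤ e * m t := by
    intro t _
    by_cases h0 : m t = 0
    · rw [h0, mul_zero]
      exact le_of_eq (null_fiber p hp0 F g t h0)
    · have hmt : 0 < m t := lt_of_le_of_ne (Finset.sum_nonneg fun ω _ => hp0 ω) (Ne.symm h0)
      have := hc t h0
      have hcond : pcond p F g t = s t / m t := rfl
      rw [hcond] at this
      calc s t = (s t / m t) * m t := by field_simp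
        _ ≤ e * m t := by nlinarith
  obtain ⟨t0, hmt0, hlt0⟩ := strictpt
  push_neg at hlt0
  have hmt0' : 0 < m t0 := lt_of_le_of_ne (Finset.sum_nonneg fun ω _ => hp0 ω) (Ne.symm hmt0)
  have hstrict : s t0 < e * m t0 := by
    have hcond : pcond p F g t0 = s t0 / m t0 := rfl
    rw [hcond] at hlt0
    calc s t0 = (s t0 / m t0) * m t0 := by field_simp
      _ < e * m t0 := by nlinarith
  have := Finset.sum_lt_sum hle ⟨t0, mem_univ t0, hstrict⟩
  rw [hsums, ← Finset.mul_sum, hsumm, mul_one] at this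
  exact lt_irrefl e this

lemma exists_cond_ge (p : Ω → ℝ) (hp0 : ∀ ω, 0 ≤ p ω) (hp1 : ∑ ω, p ω = 1)
    (F : Ω → ℝ) (g : Ω → T) :
    ∃ t, (∑ ω ∈ univ.filter (fun ω => g ω = t), p ω) ≠ 0 ∧
      pexp p F ≤ pcond p F g t := by
  by_contra hc
  push_neg at hc
  have hne : ∃ t0, (∑ ω ∈ univ.filter (fun ω => g ω = t0), p ω) ≠ 0 := by
    by_contra h
    push_neg at h
    have : (1:ℝ) = 0 := by
      rw [← hp1, ← Finset.sum_fiberwise univ g p]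
      exact Finset.sum_eq_zero fun t _ => h t
    norm_num at this
  obtain ⟨t0, ht0⟩ := hne
  obtain ⟨t, hmt, hlt⟩ := exists_cond_gen p hp0 hp1 F g
    ⟨t0, ht0, not_le_of_gt (hc t0 ht0)⟩
  exact not_le_of_gt (hc t hmt) hlt.le

lemma exists_cond_gt (p : Ω → ℝ) (hp0 : ∀ ω, 0 ≤ p ω) (hp1 : ∑ ω, p ω = 1)
    (F : Ω → ℝ) (g : Ω → T)
    (hbad : ∃ t, (∑ ω ∈ univ.filter (fun ω => g ω = t), p ω) ≠ 0 ∧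
      pcond p F g t ≠ pexp p F) :
    ∃ t, (∑ ω ∈ univ.filter (fun ω => g ω = t), p ω) ≠ 0 ∧
      pexp p F < pcond p F g t := by
  obtain ⟨t0, hm0, hne0⟩ := hbad
  by_cases h : pexp p F ≤ pcond p F g t0
  · exact ⟨t0, hm0, lt_of_le_of_ne h (Ne.symm hne0)⟩
  · exact exists_cond_gen p hp0 hp1 F g ⟨t0, hm0, h⟩

end aux

-- pi-type lemmas
lemma sum_pi_prod {n : ℕ} (Ωs : Fin n → Type) [∀ i, Fintype (Ωs i)] (u : ∀ i, Ωs i → ℝ) :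
    ∑ ω : ∀ i, Ωs i, ∏ k, u k (ω k) = ∏ k, ∑ x, u k x := by
  rw [Finset.prod_univ_sum, Fintype.piFinset_univ]

lemma core_sum {n : ℕ} (Ωs : Fin n → Type) [∀ i, Fintype (Ωs i)]
    (w : ∀ i, Ωs i → ℝ) (F : ∀ i, Ωs i → ℝ) :
    ∑ ω : ∀ i, Ωs i, (∏ k, w k (ω k)) * (∑ j, F j (ω j)) =
      ∑ j, (∑ x, w j x * F j x) * ∏ k ∈ Finset.univ.erase j, (∑ x, w k x) := by
  have h1 : ∀ ω : ∀ i, Ωs i, (∏ k, w k (ω k)) * (∑ j, F j (ω j)) =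
      ∑ j, ∏ k, (if k = j then w k (ω k) * F k (ω k) else w k (ω k)) := by
    intro ω
    rw [Finset.mul_sum]
    refine Finset.sum_congr rfl fun j _ => ?_
    rw [← Finset.mul_prod_erase Finset.univ
          (fun k => if k = j then w k (ω k) * F k (ω k) else w k (ω k)) (Finset.mem_univ j),
        ← Finset.mul_prod_erase Finset.univ (fun k => w k (ω k)) (Finset.mem_univ j)]
    simp only [eq_self_iff_true, if_true]
    rw [Finset.prod_congr rfl (fun k hk => if_neg (Finset.ne_of_mem_erase hk))]
    ring
  rw [Finset.sum_congr rfl fun ω _ => h1 ω, Finset.sum_comm]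
  refine Finset.sum_congr rfl fun j _ => ?_
  rw [sum_pi_prod Ωs (fun k x => if k = j then w k x * F k x else w k x),
      ← Finset.mul_prod_erase Finset.univ
        (fun k => ∑ x, if k = j then w k x * F k x else w k x) (Finset.mem_univ j)]
  simp only [eq_self_iff_true, if_true]
  congr 1
  refine Finset.prod_congr rfl fun k hk => ?_
  refine Finset.sum_congr rfl fun x _ => ?_
  exact if_neg (Finset.ne_of_mem_erase hk)


/-- Necessity for sums: with independent sources and `f(X) = Σ_i f_i(X_i)` encoded per
source, if some `f_i(X_i)` is not secured by `g_i` (its conditional expectation given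
`g_i(X_i)` is not a.s. constant equal to its mean), then `f` is not perfectly
distortion-secured: some positive-probability observation has `E[f | g(X)] ≠ E[f]`. -/
theorem stmt18 {n : ℕ} (Ωs : Fin n → Type) [∀ i, Fintype (Ωs i)]
    (Ts : Fin n → Type) [∀ i, Fintype (Ts i)] [∀ i, DecidableEq (Ts i)]
    (p : ∀ i, Ωs i → ℝ) (hp0 : ∀ i ω, 0 ≤ p i ω) (hp1 : ∀ i, ∑ ω, p i ω = 1)
    (F : ∀ i, Ωs i → ℝ) (g : ∀ i, Ωs i → Ts i)
    (hbad : ∃ (i : Fin n) (t : Ts i),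
      (∑ ω ∈ Finset.univ.filter (fun ω => g i ω = t), p i ω) ≠ 0 ∧
      pcond (p i) (F i) (g i) t ≠ pexp (p i) (F i)) :
    let P : (∀ i, Ωs i) → ℝ := fun ω => ∏ i, p i (ω i)
    let f : (∀ i, Ωs i) → ℝ := fun ω => ∑ i, F i (ω i)
    let G : (∀ i, Ωs i) → (∀ i, Ts i) := fun ω i => g i (ω i)
    ∃ t : ∀ i, Ts i,
      (∑ ω ∈ Finset.univ.filter (fun ω => G ω = t), P ω) ≠ 0 ∧
      pcond P f G t ≠ pexp P f := by
  intro P f G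
  obtain ⟨i, hbadi⟩ := hbad
  obtain ⟨ti, hmi, hgti⟩ := exists_cond_gt (p i) (hp0 i) (hp1 i) (F i) (g i) hbadi
  have hchoose : ∀ j, ∃ tj, (∑ ω ∈ Finset.univ.filter (fun ω => g j ω = tj), p j ω) ≠ 0 ∧
      pexp (p j) (F j) ≤ pcond (p j) (F j) (g j) tj :=
    fun j => exists_cond_ge (p j) (hp0 j) (hp1 j) (F j) (g j)
  refine ⟨Function.update (fun j => Classical.choose (hchoose j)) i ti, ?_⟩
  set t : ∀ j, Ts j := Function.update (fun j => Classical.choose (hchoose j)) i ti with ht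
  have htprop : ∀ j, (∑ ω ∈ Finset.univ.filter (fun ω => g j ω = t j), p j ω) ≠ 0 ∧
      pexp (p j) (F j) ≤ pcond (p j) (F j) (g j) (t j) := by
    intro j
    by_cases h : j = i
    · subst h; rw [ht, Function.update_self]; exact ⟨hmi, hgti.le⟩
    · rw [ht, Function.update_of_ne h]; exact Classical.choose_spec (hchoose j)
  have htstrict : pexp (p i) (F i) < pcond (p i) (F i) (g i) (t i) := by
    rw [ht, Function.update_self]; exact hgti
  -- notation
  have hqm : ∀ j, (∑ x, (if g j x = t j then p j x else 0)) =
      ∑ ω ∈ Finset.univ.filter (fun ω => g j ω = t j), p j ω := by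
    intro j; rw [Finset.sum_filter]
  -- indicator identity for mass
  have hind : ∀ ω : ∀ k, Ωs k, (if G ω = t then P ω else 0) =
      ∏ j, (if g j (ω j) = t j then p j (ω j) else 0) := by
    intro ω
    by_cases h : G ω = t
    · rw [if_pos h]
      refine Finset.prod_congr rfl fun j _ => ?_
      rw [if_pos (congrFun h j)]
    · rw [if_neg h]
      have : ∃ j, g j (ω j) ≠ t j := by
        by_contra hco; push_neg at hco
        exact h (funext hco)
      obtain ⟨j, hj⟩ := this
      symm
      apply Finset.prod_eq_zero (Finset.mem_univ j)
      rw [if_neg hj]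
  -- denominator
  have hD : (∑ ω ∈ Finset.univ.filter (fun ω => G ω = t), P ω) =
      ∏ j, ∑ ω ∈ Finset.univ.filter (fun ω => g j ω = t j), p j ω := by
    rw [Finset.sum_filter, Finset.sum_congr rfl fun ω _ => hind ω,
        sum_pi_prod Ωs (fun j x => if g j x = t j then p j x else 0)]
    exact Finset.prod_congr rfl fun j _ => hqm j
  have hDne : (∑ ω ∈ Finset.univ.filter (fun ω => G ω = t), P ω) ≠ 0 := by
    rw [hD]
    exact Finset.prod_ne_zero_iff.mpr fun j _ => (htprop j).1
  refine ⟨hDne, ?_⟩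
  -- numerator
  have hN : (∑ ω ∈ Finset.univ.filter (fun ω => G ω = t), P ω * f ω) =
      ∑ j, (∑ x, (if g j x = t j then p j x else 0) * F j x) *
        ∏ k ∈ Finset.univ.erase j,
          (∑ ω ∈ Finset.univ.filter (fun ω => g k ω = t k), p k ω) := by
    have key : ∀ ω : ∀ k, Ωs k, (if G ω = t then P ω * f ω else 0) =
        (∏ k, (if g k (ω k) = t k then p k (ω k) else 0)) * (∑ j, F j (ω j)) := by
      intro ω
      rw [← hind ω]
      by_cases h : G ω = t
      · rw [if_pos h, if_pos h]
      · rw [if_neg h, if_neg h, zero_mul]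
    rw [Finset.sum_filter, Finset.sum_congr rfl fun ω _ => key ω,
        core_sum Ωs (fun j x => if g j x = t j then p j x else 0) F]
    refine Finset.sum_congr rfl fun j _ => ?_
    congr 1
    exact Finset.prod_congr rfl fun k _ => hqm k
  -- per-coordinate numerator as pcond * mass
  have hs : ∀ j, (∑ x, (if g j x = t j then p j x else 0) * F j x) =
      pcond (p j) (F j) (g j) (t j) *
        (∑ ω ∈ Finset.univ.filter (fun ω => g j ω = t j), p j ω) := by
    intro j
    have h1 : (∑ x, (if g j x = t j then p j x else 0) * F j x) =
        ∑ ω ∈ Finset.univ.filter (fun ω => g j ω = t j), p j ω * F j ω := by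
      rw [Finset.sum_filter]
      exact Finset.sum_congr rfl fun x _ => by by_cases h : g j x = t j <;> simp [h]
    rw [h1, pcond, div_mul_cancel₀ _ (htprop j).1]
  have hN2 : (∑ ω ∈ Finset.univ.filter (fun ω => G ω = t), P ω * f ω) =
      (∑ j, pcond (p j) (F j) (g j) (t j)) *
        (∑ ω ∈ Finset.univ.filter (fun ω => G ω = t), P ω) := by
    rw [hN, hD, Finset.sum_mul]
    refine Finset.sum_congr rfl fun j _ => ?_
    rw [hs j, mul_assoc,
        Finset.mul_prod_erase Finset.univ
          (fun k => ∑ ω ∈ Finset.univ.filter (fun ω => g k ω = t k), p k ω)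
          (Finset.mem_univ j)]
  have hcond : pcond P f G t = ∑ j, pcond (p j) (F j) (g j) (t j) := by
    rw [pcond, hN2, mul_div_assoc, div_self hDne, mul_one]
  -- total expectation
  have hE : pexp P f = ∑ j, pexp (p j) (F j) := by
    rw [pexp]
    rw [core_sum Ωs p F]
    refine Finset.sum_congr rfl fun j _ => ?_
    rw [Finset.prod_congr rfl fun k _ => hp1 k, Finset.prod_const_one, mul_one, pexp]
  rw [hcond, hE]
  have : (∑ j, pexp (p j) (F j)) < ∑ j, pcond (p j) (F j) (g j) (t j) :=
    Finset.sum_lt_sum (fun j _ => (htprop j).2) ⟨i, Finset.mem_univ i, htstrict⟩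
  exact (ne_of_gt this)
end

section
/- Necessity for products: let X₁,…,X_n be independent, f(X) = Π_{i=1}^n f_i(X_i), with Π_i E[f_i(X_i)]·var(f_i(X_i)) ≠ 0 for every i, and each source encoded separately. If some f_i(X_i) is not secured by g(X_i), then there exist observation values under which |E[f(X) | g(X)]| > |E[f(X)]|, so the product is not perfectly distortion-secured. -/
section aux
variable {Ω T : Type*} [Fintype Ω] [Fintype T] [DecidableEq T]

lemma key_sum (p F : Ω → ℝ) (g : Ω → T) (hp0 : ∀ ω, 0 ≤ p ω) :
    ∑ t, (∑ ω ∈ Finset.univ.filter (fun ω => g ω = t), p ω) * pcond p F g t = pexp p F := by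
  rw [pexp, ← Finset.sum_fiberwise Finset.univ g (fun ω => p ω * F ω)]
  refine Finset.sum_congr rfl fun t _ => ?_
  by_cases hQ : (∑ ω ∈ Finset.univ.filter (fun ω => g ω = t), p ω) = 0
  · have hz : ∀ ω ∈ Finset.univ.filter (fun ω => g ω = t), p ω = 0 :=
      (Finset.sum_eq_zero_iff_of_nonneg (fun ω _ => hp0 ω)).mp hQ
    rw [hQ, zero_mul]
    exact (Finset.sum_eq_zero fun ω hω => by rw [hz ω hω, zero_mul]).symm
  · rw [pcond, mul_div_cancel₀ _ hQ]

lemma sum_Q (p : Ω → ℝ) (g : Ω → T) :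
    ∑ t, (∑ ω ∈ Finset.univ.filter (fun ω => g ω = t), p ω) = ∑ ω, p ω :=
  Finset.sum_fiberwise Finset.univ g p

lemma exists_good (p F : Ω → ℝ) (g : Ω → T) (hp0 : ∀ ω, 0 ≤ p ω) (hp1 : ∑ ω, p ω = 1)
    (s : ℝ) (hs : s * pexp p F = |pexp p F|) (hs1 : |s| = 1) :
    ∃ t, (∑ ω ∈ Finset.univ.filter (fun ω => g ω = t), p ω) ≠ 0 ∧
      |pexp p F| ≤ s * pcond p F g t := by
  by_contra hcon
  push_neg at hcon
  -- there is some t with Q t ≠ 0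
  have hQsum : ∑ t, (∑ ω ∈ Finset.univ.filter (fun ω => g ω = t), p ω) = 1 := by
    rw [sum_Q]; exact hp1
  have hQnn : ∀ t, 0 ≤ ∑ ω ∈ Finset.univ.filter (fun ω => g ω = t), p ω :=
    fun t => Finset.sum_nonneg fun ω _ => hp0 ω
  have hex : ∃ t, (∑ ω ∈ Finset.univ.filter (fun ω => g ω = t), p ω) ≠ 0 := by
    by_contra h
    push_neg at h
    rw [Finset.sum_congr rfl (fun t _ => h t)] at hQsum
    simp at hQsum
  obtain ⟨t1, ht1⟩ := hex
  have hlt : ∑ t, (∑ ω ∈ Finset.univ.filter (fun ω => g ω = t), p ω) * (s * pcond p F g t)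
      < ∑ t, (∑ ω ∈ Finset.univ.filter (fun ω => g ω = t), p ω) * |pexp p F| := by
    refine Finset.sum_lt_sum (fun t _ => ?_) ⟨t1, Finset.mem_univ t1, ?_⟩
    · by_cases hQ : (∑ ω ∈ Finset.univ.filter (fun ω => g ω = t), p ω) = 0
      · rw [hQ]; simp
      · exact mul_le_mul_of_nonneg_left (le_of_lt (hcon t hQ)) (hQnn t)
    · exact mul_lt_mul_of_pos_left (hcon t1 ht1) (lt_of_le_of_ne (hQnn t1) (Ne.symm ht1))
  rw [← Finset.sum_mul, hQsum, one_mul] at hlt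
  have : ∑ t, (∑ ω ∈ Finset.univ.filter (fun ω => g ω = t), p ω) * (s * pcond p F g t)
      = |pexp p F| := by
    rw [← hs]
    calc ∑ t, (∑ ω ∈ Finset.univ.filter (fun ω => g ω = t), p ω) * (s * pcond p F g t)
        = s * ∑ t, (∑ ω ∈ Finset.univ.filter (fun ω => g ω = t), p ω) * pcond p F g t := by
          rw [Finset.mul_sum]; exact Finset.sum_congr rfl fun t _ => by ring
      _ = s * pexp p F := by rw [key_sum p F g hp0]
  linarith

lemma exists_strict (p F : Ω → ℝ) (g : Ω → T) (hp0 : ∀ ω, 0 ≤ p ω)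
    (hp1 : ∑ ω, p ω = 1) (s : ℝ) (hs : s * pexp p F = |pexp p F|) (hs1 : |s| = 1)
    (t0 : T) (hQ0 : (∑ ω ∈ Finset.univ.filter (fun ω => g ω = t0), p ω) ≠ 0)
    (hne : pcond p F g t0 ≠ pexp p F) :
    ∃ t, (∑ ω ∈ Finset.univ.filter (fun ω => g ω = t), p ω) ≠ 0 ∧
      |pexp p F| < s * pcond p F g t := by
  by_contra hcon
  push_neg at hcon
  have hQnn : ∀ t, 0 ≤ ∑ ω ∈ Finset.univ.filter (fun ω => g ω = t), p ω :=
    fun t => Finset.sum_nonneg fun ω _ => hp0 ω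
  have hs2 : s * s = 1 := by
    have := abs_mul_abs_self s
    rw [hs1] at this; linarith
  -- sum of nonnegative terms equals zero
  have hterm : ∀ t ∈ Finset.univ,
      0 ≤ (∑ ω ∈ Finset.univ.filter (fun ω => g ω = t), p ω)
        * (|pexp p F| - s * pcond p F g t) := by
    intro t _
    by_cases hQ : (∑ ω ∈ Finset.univ.filter (fun ω => g ω = t), p ω) = 0
    · rw [hQ]; simp
    · exact mul_nonneg (hQnn t) (by linarith [hcon t hQ])
  have hsum0 : ∑ t, (∑ ω ∈ Finset.univ.filter (fun ω => g ω = t), p ω)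
      * (|pexp p F| - s * pcond p F g t) = 0 := by
    have h1 : ∑ t, (∑ ω ∈ Finset.univ.filter (fun ω => g ω = t), p ω)
        * (|pexp p F| - s * pcond p F g t)
        = (∑ t, (∑ ω ∈ Finset.univ.filter (fun ω => g ω = t), p ω)) * |pexp p F|
          - s * ∑ t, (∑ ω ∈ Finset.univ.filter (fun ω => g ω = t), p ω) * pcond p F g t := by
      rw [Finset.sum_mul, Finset.mul_sum, ← Finset.sum_sub_distrib]
      exact Finset.sum_congr rfl fun t _ => by ring
    rw [h1, key_sum p F g hp0, hs, sum_Q, hp1, one_mul, sub_self]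
  have hzero := (Finset.sum_eq_zero_iff_of_nonneg hterm).mp hsum0 t0 (Finset.mem_univ t0)
  have h2 : |pexp p F| - s * pcond p F g t0 = 0 := by
    rcases mul_eq_zero.mp hzero with h | h
    · exact absurd h hQ0
    · exact h
  apply hne
  have h3 : s * pcond p F g t0 = s * pexp p F := by rw [hs]; linarith
  have := congrArg (fun x => s * x) h3
  simp only [← mul_assoc, hs2, one_mul] at this
  exact this

end aux

lemma prod_filter_sum {n : ℕ} (Ωs : Fin n → Type) [∀ i, Fintype (Ωs i)]
    (Ts : Fin n → Type) [∀ i, DecidableEq (Ts i)]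
    (q : ∀ i, Ωs i → ℝ) (g : ∀ i, Ωs i → Ts i) (t : ∀ i, Ts i) :
    ∑ ω ∈ Finset.univ.filter (fun ω : ∀ i, Ωs i => (fun i => g i (ω i)) = t),
        ∏ i, q i (ω i)
      = ∏ i, ∑ ω ∈ Finset.univ.filter (fun ω => g i ω = t i), q i ω := by
  have hrhs : ∀ i, (∑ ω ∈ Finset.univ.filter (fun ω => g i ω = t i), q i ω)
      = ∑ ω, if g i ω = t i then q i ω else 0 := fun i => Finset.sum_filter _ _
  rw [Finset.sum_filter, Finset.prod_congr rfl (fun i (_ : i ∈ Finset.univ) => hrhs i),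
    Finset.prod_univ_sum, Fintype.piFinset_univ]
  refine Finset.sum_congr rfl fun ω _ => ?_
  by_cases h : (fun i => g i (ω i)) = t
  · rw [if_pos h]
    have h' : ∀ i, g i (ω i) = t i := fun i => congrFun h i
    rw [Finset.prod_congr rfl (fun i _ => if_pos (h' i))]
  · rw [if_neg h]
    obtain ⟨i, hi⟩ : ∃ i, g i (ω i) ≠ t i := by
      by_contra hc; push_neg at hc; exact h (funext hc)
    exact (Finset.prod_eq_zero (Finset.mem_univ i) (if_neg hi : _ = (0:ℝ))).symm

/-- Necessity for products: with independent sources, `f(X) = Π_i f_i(X_i)`, each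
`E[f_i] ≠ 0` and `var(f_i) ≠ 0`, and per-source encodings, if some `f_i(X_i)` is not secured
by `g_i`, then some positive-probability observation has `|E[f | g(X)]| > |E[f]|`, so the
product is not perfectly distortion-secured. -/
theorem stmt19 {n : ℕ} (Ωs : Fin n → Type) [∀ i, Fintype (Ωs i)]
    (Ts : Fin n → Type) [∀ i, Fintype (Ts i)] [∀ i, DecidableEq (Ts i)]
    (p : ∀ i, Ωs i → ℝ) (hp0 : ∀ i ω, 0 ≤ p i ω) (hp1 : ∀ i, ∑ ω, p i ω = 1)
    (F : ∀ i, Ωs i → ℝ) (g : ∀ i, Ωs i → Ts i)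
    (hmean : ∀ i, pexp (p i) (F i) ≠ 0) (hvar : ∀ i, pvar (p i) (F i) ≠ 0)
    (hbad : ∃ (i : Fin n) (t : Ts i),
      (∑ ω ∈ Finset.univ.filter (fun ω => g i ω = t), p i ω) ≠ 0 ∧
      pcond (p i) (F i) (g i) t ≠ pexp (p i) (F i)) :
    let P : (∀ i, Ωs i) → ℝ := fun ω => ∏ i, p i (ω i)
    let f : (∀ i, Ωs i) → ℝ := fun ω => ∏ i, F i (ω i)
    let G : (∀ i, Ωs i) → (∀ i, Ts i) := fun ω i => g i (ω i)
    ∃ t : ∀ i, Ts i,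
      (∑ ω ∈ Finset.univ.filter (fun ω => G ω = t), P ω) ≠ 0 ∧
      |pcond P f G t| > |pexp P f| := by
  intro P f G
  obtain ⟨i0, t0, hQ0, hne0⟩ := hbad
  set sgn : Fin n → ℝ := fun i => if 0 ≤ pexp (p i) (F i) then 1 else -1 with hsgn
  have hs : ∀ i, sgn i * pexp (p i) (F i) = |pexp (p i) (F i)| := by
    intro i; simp only [hsgn]
    by_cases h : 0 ≤ pexp (p i) (F i)
    · rw [if_pos h, one_mul, abs_of_nonneg h]
    · rw [if_neg h, abs_of_neg (lt_of_not_ge h)]; ring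
  have hs1 : ∀ i, |sgn i| = 1 := by
    intro i; simp only [hsgn]
    by_cases h : 0 ≤ pexp (p i) (F i) <;> simp [h]
  have habs : ∀ i ti, sgn i * pcond (p i) (F i) (g i) ti ≤ |pcond (p i) (F i) (g i) ti| := by
    intro i ti
    calc sgn i * pcond (p i) (F i) (g i) ti ≤ |sgn i * pcond (p i) (F i) (g i) ti| :=
          le_abs_self _
      _ = |pcond (p i) (F i) (g i) ti| := by rw [abs_mul, hs1 i, one_mul]
  have h1 : ∀ i, ∃ ti, (∑ ω ∈ Finset.univ.filter (fun ω => g i ω = ti), p i ω) ≠ 0 ∧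
      |pexp (p i) (F i)| ≤ |pcond (p i) (F i) (g i) ti| := by
    intro i
    obtain ⟨ti, ha, hb⟩ := exists_good (p i) (F i) (g i) (hp0 i) (hp1 i) (sgn i) (hs i) (hs1 i)
    exact ⟨ti, ha, hb.trans (habs i ti)⟩
  choose tb htb1 htb2 using h1
  obtain ⟨ts, hts1, hts2⟩ := exists_strict (p i0) (F i0) (g i0) (hp0 i0) (hp1 i0)
    (sgn i0) (hs i0) (hs1 i0) t0 hQ0 hne0
  have hts2' : |pexp (p i0) (F i0)| < |pcond (p i0) (F i0) (g i0) ts| :=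
    lt_of_lt_of_le hts2 (habs i0 ts)
  set t : ∀ i, Ts i := Function.update tb i0 ts with ht
  have htQ : ∀ i, (∑ ω ∈ Finset.univ.filter (fun ω => g i ω = t i), p i ω) ≠ 0 := by
    intro i
    by_cases h : i = i0
    · subst h; rw [ht, Function.update_self]; exact hts1
    · rw [ht, Function.update_of_ne h]; exact htb1 i
  have htc : ∀ i, |pexp (p i) (F i)| ≤ |pcond (p i) (F i) (g i) (t i)| := by
    intro i
    by_cases h : i = i0
    · subst h; rw [ht, Function.update_self]; exact le_of_lt hts2'
    · rw [ht, Function.update_of_ne h]; exact htb2 i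
  have htc0 : |pexp (p i0) (F i0)| < |pcond (p i0) (F i0) (g i0) (t i0)| := by
    rw [ht, Function.update_self]; exact hts2'
  have hGfilter : (fun ω : ∀ i, Ωs i => G ω = t) = (fun ω => (fun i => g i (ω i)) = t) := rfl
  have hden := prod_filter_sum Ωs Ts p g t
  have hnum := prod_filter_sum Ωs Ts (fun i ω => p i ω * F i ω) g t
  have hPQ : (∑ ω ∈ Finset.univ.filter (fun ω => G ω = t), P ω)
      = ∏ i, ∑ ω ∈ Finset.univ.filter (fun ω => g i ω = t i), p i ω := hden
  refine ⟨t, ?_, ?_⟩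
  · rw [hPQ]
    exact Finset.prod_ne_zero_iff.mpr fun i _ => htQ i
  · have hpc : pcond P f G t = ∏ i, pcond (p i) (F i) (g i) (t i) := by
      show (∑ ω ∈ Finset.univ.filter (fun ω => G ω = t), P ω * f ω) /
          (∑ ω ∈ Finset.univ.filter (fun ω => G ω = t), P ω) = _
      have hPf : ∀ ω : ∀ i, Ωs i, P ω * f ω = ∏ i, (p i (ω i) * F i (ω i)) := by
        intro ω; exact (Finset.prod_mul_distrib).symm
      rw [hPQ, Finset.sum_congr rfl (fun ω _ => hPf ω), hnum, ← Finset.prod_div_distrib]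
      rfl
    have hpe : pexp P f = ∏ i, pexp (p i) (F i) := by
      show ∑ ω : ∀ i, Ωs i, P ω * f ω = _
      have hPf : ∀ ω : ∀ i, Ωs i, P ω * f ω = ∏ i, (p i (ω i) * F i (ω i)) := by
        intro ω; exact (Finset.prod_mul_distrib).symm
      rw [Finset.sum_congr rfl (fun ω _ => hPf ω),
        ← Fintype.piFinset_univ (β := Ωs),
        ← Finset.prod_univ_sum (fun _ => Finset.univ) (fun i ω => p i ω * F i ω)]
      rfl
    rw [hpc, hpe, Finset.abs_prod, Finset.abs_prod]
    exact Finset.prod_lt_prod (fun i _ => abs_pos.mpr (hmean i)) (fun i _ => htc i)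
      ⟨i0, Finset.mem_univ i0, htc0⟩
end
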